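/- arXiv:2001.00643 — 6 statements merged into one kernel-verified Lean document; each statement's English description precedes it below -/
import Mathlib

section
/- Let G = (V,E) be a b-dense subgraph of the complete bipartite graph with bipartition V = V₁ ∪ V₂, where |V₁| ≤ |V₂|. If |V₁| > b and |V₂| > 2b, then G is connected and contains a matching saturating all vertices of V₁. -/
open SimpleGraph

/-- The complete bipartite graph with parts `V₁` and `V₂`. -/
def completeBipartiteOn {V : Type*} (V₁ V₂ : Set V) : SimpleGraph V where
  Adj u v := u ≠ v ∧ ((u ∈ V₁ ∧ v ∈ V₂) ∨ (u ∈ V₂ ∧ v ∈ V₁))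
  symm := ⟨by
    rintro u v ⟨hne, h⟩
    exact ⟨hne.symm, by tauto⟩⟩
  loopless := ⟨fun v h => h.1 rfl⟩

/-! Writing `dᵢ` for the least degree of a vertex of `Vᵢ`, `b`-density gives `|V₂| < d₁ + b` and
`|V₁| < d₂ + b`. Since `|V₂| > 2b`, two vertices of `V₁` have more than `|V₂|` neighbours in total,
hence a common one; every vertex of `V₂` has a neighbour in `V₁ ≠ ∅`, so `G` is connected.
For Hall's condition on `S ⊆ V₁`: if `|S| + b ≤ |V₂|`, one vertex of `S` already has more than
`|S|` neighbours; otherwise `|S| + d₂ > |V₂| + |V₁| - 2b ≥ |V₁|`, so every vertex of `V₂` has a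
neighbour in `S`, and `|N(S)| = |V₂| ≥ |V₁| ≥ |S|`. -/

theorem Set.inter_nonempty_of_ncard_lt_ncard_add_ncard {α : Type*} {s t u : Set α}
    (hts : t ⊆ s) (hus : u ⊆ s) (hs : s.Finite) (h : s.ncard < t.ncard + u.ncard) :
    (t ∩ u).Nonempty := by
  rw [← Set.ncard_union_add_ncard_inter t u (hs.subset hts) (hs.subset hus)] at h
  have hunion := Set.ncard_le_ncard (Set.union_subset hts hus) hs
  exact Set.nonempty_of_ncard_ne_zero (by omega)

theorem SimpleGraph.IsBipartiteWith.mono {V : Type*} {G H : SimpleGraph V} {s t : Set V}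
    (hle : G ≤ H) (h : H.IsBipartiteWith s t) : G.IsBipartiteWith s t where
  disjoint := h.disjoint
  mem_of_adj _ _ hadj := h.mem_of_adj (hle hadj)

section CompleteBipartiteOn

variable {V : Type*} {V₁ V₂ : Set V}

theorem completeBipartiteOn_comm : completeBipartiteOn V₁ V₂ = completeBipartiteOn V₂ V₁ := by
  ext u v
  simp only [completeBipartiteOn, or_comm]

theorem isBipartiteWith_completeBipartiteOn (h : Disjoint V₁ V₂) :
    (completeBipartiteOn V₁ V₂).IsBipartiteWith V₁ V₂ where
  disjoint := h
  mem_of_adj _ _ hadj := hadj.2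

theorem neighborSet_completeBipartiteOn_of_mem_left (h : Disjoint V₁ V₂) {v : V} (hv : v ∈ V₁) :
    (completeBipartiteOn V₁ V₂).neighborSet v = V₂ := by
  refine Set.Subset.antisymm (isBipartiteWith_neighborSet_subset
    (isBipartiteWith_completeBipartiteOn h) hv) fun w hw => ?_
  exact ⟨fun hvw => Set.disjoint_left.mp h hv (hvw ▸ hw), Or.inl ⟨hv, hw⟩⟩

theorem neighborSet_completeBipartiteOn_of_mem_right (h : Disjoint V₁ V₂) {v : V} (hv : v ∈ V₂) :
    (completeBipartiteOn V₁ V₂).neighborSet v = V₁ := by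
  rw [completeBipartiteOn_comm]
  exact neighborSet_completeBipartiteOn_of_mem_left h.symm hv

end CompleteBipartiteOn

namespace SimpleGraph

variable {V : Type*} [Finite V] {G : SimpleGraph V} {V₁ V₂ : Set V} {b : ℕ}

theorem IsBipartiteWith.exists_common_neighbor (hG : G.IsBipartiteWith V₁ V₂)
    (hdeg : ∀ v ∈ V₁, V₂.ncard < (G.neighborSet v).ncard + b) (hb : 2 * b < V₂.ncard)
    {v w : V} (hv : v ∈ V₁) (hw : w ∈ V₁) : ∃ u, G.Adj v u ∧ G.Adj w u := by
  have hv' := hdeg v hv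
  have hw' := hdeg w hw
  exact Set.inter_nonempty_of_ncard_lt_ncard_add_ncard (t := G.neighborSet v)
    (u := G.neighborSet w) (isBipartiteWith_neighborSet_subset hG hv)
    (isBipartiteWith_neighborSet_subset hG hw) V₂.toFinite (by omega)

theorem IsBipartiteWith.connected (hG : G.IsBipartiteWith V₁ V₂) (hcov : V₁ ∪ V₂ = Set.univ)
    (hdeg₁ : ∀ v ∈ V₁, V₂.ncard < (G.neighborSet v).ncard + b)
    (hdeg₂ : ∀ v ∈ V₂, V₁.ncard < (G.neighborSet v).ncard + b)
    (hb₁ : b < V₁.ncard) (hb₂ : 2 * b < V₂.ncard) : G.Connected := by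
  have reachable_left (u : V) : ∃ v ∈ V₁, G.Reachable u v := by
    rcases Set.eq_univ_iff_forall.mp hcov u with hu | hu
    · exact ⟨u, hu, .rfl⟩
    · have hu' := hdeg₂ u hu
      obtain ⟨v, hv⟩ := Set.nonempty_of_ncard_ne_zero (s := G.neighborSet u) (by omega)
      exact ⟨v, isBipartiteWith_neighborSet_subset' hG hu hv, Adj.reachable hv⟩
  obtain ⟨v₀, hv₀⟩ := Set.nonempty_of_ncard_ne_zero (s := V₁) (by omega)
  refine (connected_iff_exists_forall_reachable G).mpr ⟨v₀, fun u => ?_⟩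
  obtain ⟨v, hv, huv⟩ := reachable_left u
  obtain ⟨w, hv₀w, hvw⟩ := hG.exists_common_neighbor hdeg₁ hb₂ hv₀ hv
  exact hv₀w.reachable.trans (hvw.reachable.symm.trans huv.symm)

theorem IsBipartiteWith.subset_biUnion_neighborSet (hG : G.IsBipartiteWith V₁ V₂)
    (hdeg : ∀ v ∈ V₂, V₁.ncard < (G.neighborSet v).ncard + b) (hb : 2 * b ≤ V₂.ncard)
    {s : Set V} (hs : s ⊆ V₁) (hsb : V₂.ncard < s.ncard + b) :
    V₂ ⊆ ⋃ x ∈ s, G.neighborSet x := by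
  intro u hu
  have hu' := hdeg u hu
  obtain ⟨x, hxs, hxu⟩ := Set.inter_nonempty_of_ncard_lt_ncard_add_ncard
    (u := G.neighborSet u) hs (isBipartiteWith_neighborSet_subset' hG hu) V₁.toFinite (by omega)
  exact Set.mem_biUnion hxs (G.adj_symm hxu)

theorem IsBipartiteWith.ncard_le_ncard_biUnion_neighborSet (hG : G.IsBipartiteWith V₁ V₂)
    (hcard : V₁.ncard ≤ V₂.ncard)
    (hdeg₁ : ∀ v ∈ V₁, V₂.ncard < (G.neighborSet v).ncard + b)
    (hdeg₂ : ∀ v ∈ V₂, V₁.ncard < (G.neighborSet v).ncard + b) (hb : 2 * b ≤ V₂.ncard)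
    {s : Set V} (hs : s ⊆ V₁) : s.ncard ≤ (⋃ x ∈ s, G.neighborSet x).ncard := by
  obtain rfl | ⟨x, hx⟩ := s.eq_empty_or_nonempty
  · simp
  by_cases hsb : V₂.ncard < s.ncard + b
  · calc s.ncard ≤ V₁.ncard := Set.ncard_le_ncard hs
      _ ≤ V₂.ncard := hcard
      _ ≤ _ := Set.ncard_le_ncard (hG.subset_biUnion_neighborSet hdeg₂ hb hs hsb)
  · have hx' := hdeg₁ x (hs hx)
    have hsub := Set.ncard_le_ncard (Set.subset_biUnion_of_mem (u := G.neighborSet) hx)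
    omega

end SimpleGraph

/-- If G is a b-dense subgraph of the complete bipartite graph with parts V₁, V₂ where
|V₁| ≤ |V₂|, |V₁| > b and |V₂| > 2b, then G is connected and contains a matching
saturating all vertices of V₁. -/
theorem stmt6 {V : Type*} [Fintype V] (V₁ V₂ : Set V) (b : ℕ)
    (hcov : V₁ ∪ V₂ = Set.univ) (hdisj : Disjoint V₁ V₂)
    (hcard : V₁.ncard ≤ V₂.ncard)
    (G : SimpleGraph V) (hsub : G ≤ completeBipartiteOn V₁ V₂)
    (hdense : ∀ v : V,
      ((completeBipartiteOn V₁ V₂).neighborSet v).ncard < (G.neighborSet v).ncard + b)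
    (hb1 : b < V₁.ncard) (hb2 : 2 * b < V₂.ncard) :
    G.Connected ∧ ∃ M : G.Subgraph, M.IsMatching ∧ V₁ ⊆ M.verts := by
  classical
  have hG : G.IsBipartiteWith V₁ V₂ := (isBipartiteWith_completeBipartiteOn hdisj).mono hsub
  have hdeg₁ : ∀ v ∈ V₁, V₂.ncard < (G.neighborSet v).ncard + b := fun v hv => by
    simpa only [neighborSet_completeBipartiteOn_of_mem_left hdisj hv] using hdense v
  have hdeg₂ : ∀ v ∈ V₂, V₁.ncard < (G.neighborSet v).ncard + b := fun v hv => by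
    simpa only [neighborSet_completeBipartiteOn_of_mem_right hdisj hv] using hdense v
  obtain ⟨M, hV₁, hM⟩ := exists_isMatching_of_forall_ncard_le hG
    fun s hs => hG.ncard_le_ncard_biUnion_neighborSet hcard hdeg₁ hdeg₂ hb2.le hs
  exact ⟨hG.connected hcov hdeg₁ hdeg₂ hb1 hb2, M, hM, hV₁⟩
end

section
/- Let G = (V,E) be a graph on N vertices with minimum degree at least N − N/8, whose edges are coloured with three colours, and let F₁ = (V₁,E₁) and F₂ = (V₂,E₂) be monochromatic components of the first and the second colour, respectively. Then either there exists a monochromatic component of the third colour which contains a matching saturating N/2 vertices, or min{|V₁ \ V₂|, |V₂ \ V₁|} < N/4. -/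
/-!
Put `A = V₁ \ V₂` and `B = V₂ \ V₁`. Every edge of `G` between `A` and `B` has the third
colour: an edge of the first colour would put its end in `B` into `F₁`, one of the second colour
its end in `A` into `F₂`. Every vertex has fewer than `N/8` non-neighbours in `G`, so if
`|A|, |B| ≥ N/4`, then in the third colour each vertex of one side is adjacent to all but fewer
than `N/8` vertices of the other. Hence any two vertices of `A` have a common neighbour in `B`,
so `A ∪ B` lies in one component, and Hall's condition holds for the smaller side: a small set
already has as many neighbours as any one of its members, and a large one is adjacent to every
vertex of the other side. The resulting matching saturates `2 min(|A|, |B|) ≥ N/2` vertices.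
-/

open SimpleGraph

/-- The subgraph of `G` spanned by the edges of colour `i` under the edge-colouring `c`. -/
def colourGraph {V : Type*} (G : SimpleGraph V) (c : Sym2 V → Fin 3) (i : Fin 3) :
    SimpleGraph V where
  Adj u v := G.Adj u v ∧ c s(u, v) = i
  symm := ⟨fun u v h => ⟨h.1.symm, by rw [Sym2.eq_swap]; exact h.2⟩⟩
  loopless := ⟨fun v h => G.loopless.irrefl v h.1⟩

open Finset

namespace SimpleGraph

section Bipartite

variable {V : Type*} [Fintype V] [DecidableEq V] {H : SimpleGraph V} [DecidableRel H.Adj]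
  {A B : Finset V} {m : ℕ}

theorem exists_adj_adj_of_card_sdiff_neighborFinset_le {u v : V}
    (hu : #(B \ H.neighborFinset u) ≤ m) (hv : #(B \ H.neighborFinset v) ≤ m)
    (hB : 2 * m < #B) : ∃ b ∈ B, H.Adj u b ∧ H.Adj v b := by
  have hlt : #((B \ H.neighborFinset u) ∪ (B \ H.neighborFinset v)) < #B :=
    (card_union_le _ _).trans_lt (by omega)
  obtain ⟨b, hb, hbu⟩ := exists_mem_notMem_of_card_lt_card hlt
  simp only [mem_union, mem_sdiff, mem_neighborFinset, not_or, not_and, not_not] at hbu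
  exact ⟨b, hb, hbu.1 hb, hbu.2 hb⟩

theorem card_le_card_biUnion_inter_neighborFinset (hAB : #A ≤ #B) (hA : 2 * m < #A)
    (hmA : ∀ a ∈ A, #(B \ H.neighborFinset a) ≤ m)
    (hmB : ∀ b ∈ B, #(A \ H.neighborFinset b) ≤ m) {S : Finset V} (hS : S ⊆ A) :
    #S ≤ #(S.biUnion fun a => B ∩ H.neighborFinset a) := by
  obtain rfl | ⟨a, ha⟩ := S.eq_empty_or_nonempty
  · simp
  by_cases hsmall : #S + m ≤ #B
  · calc #S ≤ #(B ∩ H.neighborFinset a) := by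
          have := card_sdiff_add_card_inter B (H.neighborFinset a)
          have := hmA a (hS ha)
          omega
      _ ≤ _ := card_le_card (subset_biUnion_of_mem (fun a => B ∩ H.neighborFinset a) ha)
  have hcover : B ⊆ S.biUnion fun a => B ∩ H.neighborFinset a := by
    intro b hb
    by_contra hnot
    have hsub : S ⊆ A \ H.neighborFinset b := fun a ha' =>
      mem_sdiff.2 ⟨hS ha', fun hab => hnot (mem_biUnion.2 ⟨a, ha', mem_inter.2
        ⟨hb, (mem_neighborFinset _ _ _).2 ((mem_neighborFinset _ _ _).1 hab).symm⟩⟩)⟩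
    have := (card_le_card hsub).trans (hmB b hb)
    omega
  exact (card_le_card hS).trans (hAB.trans (card_le_card hcover))

theorem exists_injective_adj_of_card_sdiff_neighborFinset_le (hAB : #A ≤ #B) (hA : 2 * m < #A)
    (hmA : ∀ a ∈ A, #(B \ H.neighborFinset a) ≤ m)
    (hmB : ∀ b ∈ B, #(A \ H.neighborFinset b) ≤ m) :
    ∃ f : A → V, Function.Injective f ∧ ∀ a, f a ∈ B ∧ H.Adj a (f a) := by
  have hall : ∀ s : Finset A, #s ≤ #(s.biUnion fun a => B ∩ H.neighborFinset a) := fun s => by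
    have := card_le_card_biUnion_inter_neighborFinset hAB hA hmA hmB (S := s.image Subtype.val)
      fun _ hx => by obtain ⟨a, -, rfl⟩ := mem_image.1 hx; exact a.2
    rwa [image_biUnion, card_image_of_injective _ Subtype.val_injective] at this
  obtain ⟨f, hf, hfB⟩ := (all_card_le_biUnion_card_iff_existsInjective' _).1 hall
  exact ⟨f, hf, fun a => by simpa using hfB a⟩

theorem exists_isMatching_subset_supp (hAB : Disjoint A B) (hA : 2 * m < #A) (hB : 2 * m < #B)
    (hmA : ∀ a ∈ A, #(B \ H.neighborFinset a) ≤ m)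
    (hmB : ∀ b ∈ B, #(A \ H.neighborFinset b) ≤ m) :
    ∃ (M : H.Subgraph) (K : H.ConnectedComponent),
      M.IsMatching ∧ M.verts ⊆ K.supp ∧ 2 * min #A #B ≤ M.verts.ncard := by
  wlog hle : #A ≤ #B generalizing A B
  · simpa [min_comm] using this hAB.symm hB hA hmB hmA (by omega)
  obtain ⟨f, hf, hfB⟩ := exists_injective_adj_of_card_sdiff_neighborFinset_le hle hA hmA hmB
  have hdisj : Disjoint (A : Set V) (Set.range f) := by
    rw [Set.disjoint_right]
    rintro _ ⟨a, rfl⟩ ha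
    exact Finset.disjoint_left.1 hAB (mem_coe.1 ha) (hfB a).1
  obtain ⟨M, hMverts, hM⟩ := Subgraph.IsMatching.exists_of_disjoint_sets_of_equiv hdisj
    (Equiv.ofInjective f hf) fun a => (hfB a).2
  obtain ⟨a₀, ha₀⟩ : A.Nonempty := card_pos.1 (by omega)
  have hreach : ∀ a ∈ A, H.Reachable a₀ a := fun a ha => by
    obtain ⟨b, -, hab₀, hab⟩ :=
      exists_adj_adj_of_card_sdiff_neighborFinset_le (hmA a₀ ha₀) (hmA a ha) hB
    exact hab₀.reachable.trans hab.symm.reachable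
  refine ⟨M, H.connectedComponentMk a₀, hM, ?_, ?_⟩
  · rw [hMverts]
    rintro v (hv | ⟨a, rfl⟩) <;>
      rw [ConnectedComponent.mem_supp_iff, eq_comm, ConnectedComponent.eq]
    · exact hreach v hv
    · exact (hreach a a.2).trans (hfB a).2.reachable
  · rw [hMverts, Set.ncard_union_eq hdisj, Set.ncard_coe_finset,
      Set.ncard_range_of_injective hf, Nat.card_eq_finsetCard]
    omega

end Bipartite

section Complement

variable {V : Type*} [Fintype V] [DecidableEq V] {G H : SimpleGraph V} [DecidableRel G.Adj]
  [DecidableRel H.Adj]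

theorem card_sdiff_neighborFinset_le_maxDegree_compl {v : V} {X : Finset V} (hv : v ∉ X)
    (h : ∀ w ∈ X, G.Adj v w → H.Adj v w) : #(X \ H.neighborFinset v) ≤ Gᶜ.maxDegree := by
  refine le_trans (card_le_card fun w hw => ?_) (Gᶜ.degree_le_maxDegree v)
  obtain ⟨hwX, hvw⟩ := mem_sdiff.1 hw
  rw [mem_neighborFinset] at hvw ⊢
  exact (compl_adj G v w).2 ⟨fun hvw' => hv (hvw' ▸ hwX), fun hG => hvw (h w hwX hG)⟩

theorem maxDegree_compl_le [Nonempty V] {δ : ℝ}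
    (h : ∀ v, (Fintype.card V : ℝ) - δ ≤ G.degree v) :
    (Gᶜ.maxDegree : ℝ) ≤ δ - 1 := by
  obtain ⟨v, hv⟩ := Gᶜ.exists_maximal_degree_vertex
  have hlt := G.degree_lt_card_verts v
  rw [hv, degree_compl, Nat.cast_sub (by omega), Nat.cast_sub (by omega), Nat.cast_one]
  linarith [h v]

end Complement

end SimpleGraph

theorem colourGraph_two_adj_of_mem_supp_sdiff {V : Type*} {G : SimpleGraph V}
    {c : Sym2 V → Fin 3} {K₁ : (colourGraph G c 0).ConnectedComponent}
    {K₂ : (colourGraph G c 1).ConnectedComponent} {a b : V} (ha : a ∈ K₁.supp \ K₂.supp)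
    (hb : b ∈ K₂.supp \ K₁.supp) (hab : G.Adj a b) : (colourGraph G c 2).Adj a b := by
  refine ⟨hab, ?_⟩
  obtain ⟨ha₁, ha₂⟩ := ha
  obtain ⟨hb₂, hb₁⟩ := hb
  simp only [ConnectedComponent.mem_supp_iff] at ha₁ ha₂ hb₁ hb₂
  match h : c s(a, b) with
  | 0 =>
    have hab₀ : (colourGraph G c 0).Adj a b := ⟨hab, h⟩
    exact absurd (ha₁ ▸ (ConnectedComponent.sound hab₀.reachable).symm) hb₁
  | 1 =>
    have hab₁ : (colourGraph G c 1).Adj a b := ⟨hab, h⟩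
    exact absurd (hb₂ ▸ ConnectedComponent.sound hab₁.reachable) ha₂
  | 2 => rfl

/-- Let G be a graph on N vertices with minimum degree at least N − N/8, 3-edge-coloured,
and let K₁, K₂ be monochromatic components of the first and second colour. Then either
there is a component of the third colour containing a matching saturating N/2 vertices,
or min{|V₁ \ V₂|, |V₂ \ V₁|} < N/4. -/
theorem stmt7 (N : ℕ) (G : SimpleGraph (Fin N))
    (hdeg : ∀ v, (N : ℝ) - (N : ℝ) / 8 ≤ (G.neighborSet v).ncard)
    (c : Sym2 (Fin N) → Fin 3)
    (K₁ : (colourGraph G c 0).ConnectedComponent)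
    (K₂ : (colourGraph G c 1).ConnectedComponent) :
    (∃ (M : (colourGraph G c 2).Subgraph) (K : (colourGraph G c 2).ConnectedComponent),
        M.IsMatching ∧ M.verts ⊆ K.supp ∧ (N : ℝ) / 2 ≤ M.verts.ncard) ∨
      min (((K₁.supp \ K₂.supp).ncard : ℝ)) (((K₂.supp \ K₁.supp).ncard : ℝ)) <
        (N : ℝ) / 4 := by
  classical
  have : Nonempty (Fin N) := K₁.nonempty_supp.to_subtype.map Subtype.val
  refine or_iff_not_imp_right.2 fun hmin => ?_
  rw [not_lt, le_min_iff, Set.ncard_eq_toFinset_card', Set.ncard_eq_toFinset_card'] at hmin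
  have hm : (Gᶜ.maxDegree : ℝ) ≤ N / 8 - 1 := maxDegree_compl_le fun v => by
    simpa [Set.ncard_eq_toFinset_card', ← neighborFinset_def] using hdeg v
  set A := (K₁.supp \ K₂.supp).toFinset
  set B := (K₂.supp \ K₁.supp).toFinset
  have hAB : Disjoint A B :=
    Set.disjoint_toFinset.2 (Set.disjoint_sdiff_left.mono_right Set.sdiff_subset)
  have hcol {a b} (ha : a ∈ A) (hb : b ∈ B) : G.Adj a b → (colourGraph G c 2).Adj a b :=
    colourGraph_two_adj_of_mem_supp_sdiff (Set.mem_toFinset.1 ha) (Set.mem_toFinset.1 hb)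
  obtain ⟨M, K, hM, hMK, hcard⟩ := exists_isMatching_subset_supp (m := Gᶜ.maxDegree) hAB
    (by exact_mod_cast (by linarith : (2 * Gᶜ.maxDegree : ℝ) < #A))
    (by exact_mod_cast (by linarith : (2 * Gᶜ.maxDegree : ℝ) < #B))
    (fun a ha => card_sdiff_neighborFinset_le_maxDegree_compl (disjoint_left.1 hAB ha)
      fun _ hb => hcol ha hb)
    (fun b hb => card_sdiff_neighborFinset_le_maxDegree_compl (disjoint_right.1 hAB hb)
      fun _ ha hba => (hcol ha hb hba.symm).symm)
  refine ⟨M, K, hM, hMK, ?_⟩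
  have : ((2 * min #A #B : ℕ) : ℝ) ≤ M.verts.ncard := by exact_mod_cast hcard
  push_cast at this
  linarith [le_min hmin.1 hmin.2]
end

section
/- Let G = (V,E) be a graph on N vertices with minimum degree at least N − N/8, whose edges are coloured with three colours. If G contains no monochromatic component with a matching saturating at least N/2 vertices, then any two monochromatic components of different colours, each having at least N/2 vertices, share more than N/4 vertices. -/
/-! If `Ki` and `Kj` (of colours `i ≠ j`) shared at most `N/4` vertices, then `A = Ki \ Kj` and
`B = Kj \ Ki` would both have at least `N/4` vertices. An edge between `A` and `B` has neither
colour `i` nor colour `j`, so it has the third colour `k`. As every vertex misses fewer than `N/8`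
vertices, Hall's condition holds and the smaller of `A`, `B` is matched into the other by `k`-edges;
any two vertices of `A` have a common neighbour in `B`, so this matching lies in a single
`k`-component, and it saturates at least `N/2` vertices. -/

open SimpleGraph

open Finset Function

namespace SimpleGraph

variable {V : Type*} [DecidableEq V] (H : SimpleGraph V) [DecidableRel H.Adj]

theorem reachable_of_card_lt_card_filter_adj_add_card_filter_adj {B : Finset V} {u v : V}
    (h : #B < #{b ∈ B | H.Adj u b} + #{b ∈ B | H.Adj v b}) : H.Reachable u v := by
  obtain ⟨b, hb⟩ := inter_nonempty_of_card_lt_card_add_card (filter_subset _ _)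
    (filter_subset _ _) h
  simp only [mem_inter, mem_filter] at hb
  exact hb.1.2.reachable.trans hb.2.2.reachable.symm

theorem exists_injective_adj_of_card_filter_not_adj_le {A B : Finset V} {d : ℕ}
    (hAB : #A ≤ #B) (hdB : 2 * d ≤ #B)
    (hA : ∀ a ∈ A, #{b ∈ B | ¬H.Adj a b} ≤ d) (hB : ∀ b ∈ B, #{a ∈ A | ¬H.Adj b a} ≤ d) :
    ∃ f : A → V, Injective f ∧ ∀ a, f a ∈ B ∧ H.Adj a (f a) := by
  suffices hall : ∀ s : Finset A, #s ≤ #(s.biUnion fun a => {b ∈ B | H.Adj a b}) by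
    obtain ⟨f, hf, hfB⟩ := (all_card_le_biUnion_card_iff_exists_injective _).mp hall
    exact ⟨f, hf, fun a => mem_filter.mp (hfB a)⟩
  intro s
  rcases s.eq_empty_or_nonempty with rfl | ⟨a, ha⟩
  · simp
  by_cases hs : #s + d ≤ #B
  · calc #s ≤ #{b ∈ B | H.Adj a b} := by
          have := B.card_filter_add_card_filter_not (fun b => H.Adj a b)
          have := hA a a.2
          omega
      _ ≤ _ := card_le_card <|
          subset_biUnion_of_mem (fun a : A => {b ∈ B | H.Adj a b}) ha
  · calc #s ≤ #A := (card_le_univ s).trans_eq (Fintype.card_coe A)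
      _ ≤ #B := hAB
      _ ≤ _ := card_le_card fun b hb => ?_
    -- `b` misses at most `d < #s` vertices of `A`, so it has a neighbour in `s`
    by_contra hbs
    have hsub : s.map (Embedding.subtype _) ⊆ {a ∈ A | ¬H.Adj b a} := fun a ha' => by
      obtain ⟨a, ha, rfl⟩ := mem_map.mp ha'
      exact mem_filter.mpr ⟨a.2, fun hab => hbs (mem_biUnion.mpr
        ⟨a, ha, mem_filter.mpr ⟨hb, hab.symm⟩⟩)⟩
    have := (card_le_card hsub).trans (hB b hb)
    rw [card_map] at this
    omega

theorem exists_isMatching_subset_supp_ncard_eq {A B : Finset V} (hAB : Disjoint A B)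
    (hA₀ : A.Nonempty) {d : ℕ} (hcard : #A ≤ #B) (hdB : 2 * d < #B)
    (hA : ∀ a ∈ A, #{b ∈ B | ¬H.Adj a b} ≤ d) (hB : ∀ b ∈ B, #{a ∈ A | ¬H.Adj b a} ≤ d) :
    ∃ (M : H.Subgraph) (K : H.ConnectedComponent),
      M.IsMatching ∧ M.verts ⊆ K.supp ∧ M.verts.ncard = 2 * #A := by
  obtain ⟨f, hf, hfB⟩ := H.exists_injective_adj_of_card_filter_not_adj_le hcard hdB.le hA hB
  have hdisj : Disjoint (A : Set V) (Set.range f) := Set.disjoint_right.mpr fun _ ⟨a, ha⟩ =>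
    Finset.disjoint_right.mp hAB (ha ▸ (hfB a).1)
  obtain ⟨M, hMverts, hM⟩ := Subgraph.IsMatching.exists_of_disjoint_sets_of_equiv hdisj
    (Equiv.ofInjective f hf) fun a => (hfB a).2
  obtain ⟨a₀, ha₀⟩ := hA₀
  have hreach : ∀ a ∈ A, H.Reachable a₀ a := fun a ha => by
    refine H.reachable_of_card_lt_card_filter_adj_add_card_filter_adj (B := B) ?_
    have := B.card_filter_add_card_filter_not (fun b => H.Adj a₀ b)
    have := B.card_filter_add_card_filter_not (fun b => H.Adj a b)
    have := hA a₀ ha₀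
    have := hA a ha
    omega
  refine ⟨M, H.connectedComponentMk a₀, hM, ?_, ?_⟩
  · rw [hMverts]
    rintro v (hv | ⟨a, rfl⟩)
    · exact ConnectedComponent.eq.mpr (hreach v hv).symm
    · exact ConnectedComponent.eq.mpr ((hreach a a.2).trans (hfB a).2.reachable).symm
  · rw [hMverts, Set.ncard_union_eq hdisj, Set.ncard_coe_finset,
      Set.ncard_range_of_injective hf, Nat.card_eq_fintype_card, Fintype.card_coe]
    ring

variable [Fintype V]

theorem card_filter_not_adj_add_degree_lt {v : V} {T : Finset V} (hv : v ∉ T) :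
    #{w ∈ T | ¬H.Adj v w} + H.degree v < Fintype.card V := by
  have hsub : {w ∈ T | ¬H.Adj v w} ⊆ (insert v (H.neighborFinset v))ᶜ := fun w hw => by
    simp only [mem_filter] at hw
    simp only [mem_compl, mem_insert, mem_neighborFinset, not_or]
    exact ⟨fun h => hv (h ▸ hw.1), hw.2⟩
  have := card_le_card hsub
  rw [card_compl, card_insert_of_notMem (H.notMem_neighborFinset_self v),
    card_neighborFinset_eq_degree] at this
  have := H.degree_lt_card_verts v
  omega

end SimpleGraph

theorem Fin.exists_eq_of_ne_of_ne_three {i j : Fin 3} (hij : i ≠ j) :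
    ∃ k : Fin 3, ∀ x, x ≠ i → x ≠ j → x = k := by
  revert i j; decide

theorem colourGraph_adj_of_mem_sdiff {V : Type*} {G : SimpleGraph V} {c : Sym2 V → Fin 3}
    {i j k : Fin 3} (hk : ∀ x, x ≠ i → x ≠ j → x = k)
    {Ki : (colourGraph G c i).ConnectedComponent} {Kj : (colourGraph G c j).ConnectedComponent}
    {a b : V} (ha : a ∈ Ki.supp ∧ a ∉ Kj.supp) (hb : b ∈ Kj.supp ∧ b ∉ Ki.supp)
    (hab : G.Adj a b) : (colourGraph G c k).Adj a b :=
  ⟨hab, hk _ (fun h => hb.2 (Ki.mem_supp_of_adj_mem_supp ha.1 ⟨hab, h⟩))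
    (fun h => ha.2 (Kj.mem_supp_of_adj_mem_supp hb.1 ⟨hab.symm, by rwa [Sym2.eq_swap]⟩))⟩

theorem exists_colourGraph_isMatching_of_subset_sdiff {V : Type*} [Fintype V] [DecidableEq V]
    (G : SimpleGraph V) [DecidableRel G.Adj] (c : Sym2 V → Fin 3) {d : ℕ}
    (hdeg : ∀ v, Fintype.card V ≤ G.degree v + d + 1) {i j : Fin 3} (hij : i ≠ j)
    (Ki : (colourGraph G c i).ConnectedComponent) (Kj : (colourGraph G c j).ConnectedComponent)
    {A B : Finset V} (hA : ∀ a ∈ A, a ∈ Ki.supp ∧ a ∉ Kj.supp)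
    (hB : ∀ b ∈ B, b ∈ Kj.supp ∧ b ∉ Ki.supp) (hA₀ : A.Nonempty) (hcard : #A ≤ #B)
    (hdB : 2 * d < #B) :
    ∃ (k : Fin 3) (M : (colourGraph G c k).Subgraph)
      (K : (colourGraph G c k).ConnectedComponent),
      M.IsMatching ∧ M.verts ⊆ K.supp ∧ M.verts.ncard = 2 * #A := by
  classical
  obtain ⟨k, hk⟩ := Fin.exists_eq_of_ne_of_ne_three hij
  have hnonadj : ∀ v (T : Finset V), v ∉ T → #{w ∈ T | ¬G.Adj v w} ≤ d := fun v T hv => by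
    have := G.card_filter_not_adj_add_degree_lt hv
    have := hdeg v
    omega
  have hAB : Disjoint A B := Finset.disjoint_left.mpr fun a ha hb => (hB a hb).2 (hA a ha).1
  refine ⟨k, (colourGraph G c k).exists_isMatching_subset_supp_ncard_eq hAB hA₀ hcard hdB
    (fun a ha => ?_) (fun b hb => ?_)⟩
  · refine (card_le_card fun b hb => ?_).trans (hnonadj a B (Finset.disjoint_left.mp hAB ha))
    simp only [mem_filter] at hb ⊢
    exact ⟨hb.1, fun hab => hb.2 (colourGraph_adj_of_mem_sdiff hk (hA a ha) (hB b hb.1) hab)⟩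
  · refine (card_le_card fun a ha => ?_).trans (hnonadj b A (Finset.disjoint_right.mp hAB hb))
    simp only [mem_filter] at ha ⊢
    exact ⟨ha.1, fun hab => ha.2
      (colourGraph_adj_of_mem_sdiff hk (hA a ha.1) (hB b hb) hab.symm).symm⟩

theorem SimpleGraph.ncard_neighborSet_eq_degree {V : Type*} [Fintype V] (G : SimpleGraph V)
    [DecidableRel G.Adj] (v : V) : (G.neighborSet v).ncard = G.degree v := by
  rw [Set.ncard_eq_toFinset_card', ← card_neighborSet_eq_degree, Set.toFinset_card]

theorem Set.le_four_mul_ncard_diff {α : Type*} [Finite α] {S T : Set α} {N : ℕ}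
    (hS : (N : ℝ) / 2 ≤ S.ncard) (hST : ((S ∩ T).ncard : ℝ) ≤ N / 4) :
    N ≤ 4 * (S \ T).ncard := by
  rw [← Set.ncard_inter_add_ncard_sdiff_eq_ncard S T, Nat.cast_add] at hS
  have : (N : ℝ) ≤ 4 * (S \ T).ncard := by linarith
  exact_mod_cast this

/-- Let G be a graph on N vertices with minimum degree at least N − N/8, 3-edge-coloured.
If no monochromatic component contains a matching saturating at least N/2 vertices, then
any two monochromatic components of different colours, each with at least N/2 vertices,
share more than N/4 vertices. -/
theorem stmt8 (N : ℕ) (G : SimpleGraph (Fin N))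
    (hdeg : ∀ v, (N : ℝ) - (N : ℝ) / 8 ≤ (G.neighborSet v).ncard)
    (c : Sym2 (Fin N) → Fin 3)
    (hno : ¬ ∃ (i : Fin 3) (M : (colourGraph G c i).Subgraph)
        (K : (colourGraph G c i).ConnectedComponent),
        M.IsMatching ∧ M.verts ⊆ K.supp ∧ (N : ℝ) / 2 ≤ M.verts.ncard) :
    ∀ (i j : Fin 3), i ≠ j →
      ∀ (Ki : (colourGraph G c i).ConnectedComponent)
        (Kj : (colourGraph G c j).ConnectedComponent),
        (N : ℝ) / 2 ≤ Ki.supp.ncard → (N : ℝ) / 2 ≤ Kj.supp.ncard →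
        (N : ℝ) / 4 < ((Ki.supp ∩ Kj.supp).ncard : ℝ) := by
  classical
  intro i j hij Ki Kj hKi hKj
  by_contra! hsmall
  wlog hAB : (Ki.supp \ Kj.supp).ncard ≤ (Kj.supp \ Ki.supp).ncard generalizing i j
  · exact this j i hij.symm Kj Ki hKj hKi (by rwa [Set.inter_comm]) (by omega)
  have hA := Set.le_four_mul_ncard_diff hKi hsmall
  have hB := Set.le_four_mul_ncard_diff hKj (by rwa [Set.inter_comm])
  have hdeg' (v : Fin N) : Fintype.card (Fin N) ≤ G.degree v + (N / 8 - 1) + 1 := by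
    have := hdeg v
    rw [G.ncard_neighborSet_eq_degree] at this
    have : (7 * N : ℝ) ≤ 8 * G.degree v := by linarith
    have : 7 * N ≤ 8 * G.degree v := by exact_mod_cast this
    rw [Fintype.card_fin]
    omega
  have hN : 0 < N := Ki.exists_rep.choose.pos
  simp only [Set.ncard_eq_toFinset_card'] at hA hB hAB
  obtain ⟨k, M, K, hM, hMK, hMcard⟩ := exists_colourGraph_isMatching_of_subset_sdiff G c hdeg'
    hij Ki Kj (A := (Ki.supp \ Kj.supp).toFinset) (B := (Kj.supp \ Ki.supp).toFinset)
    (by simp) (by simp) (Finset.card_pos.mp (by omega)) hAB (by omega)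
  refine hno ⟨k, M, K, hM, hMK, ?_⟩
  rw [hMcard]
  have : (N : ℝ) ≤ 4 * (Ki.supp \ Kj.supp).toFinset.card := by exact_mod_cast hA
  push_cast
  linarith
end

section
/- Let Ĥ = Ĥ(m₀; m₁, m₂, m₃) be the graph whose vertex set is partitioned into disjoint sets Z₀, Z₁, Z₂, Z₃ of sizes m₀, m₁, m₂, m₃ respectively, whose edges are all pairs of vertices lying in two different parts together with all pairs of vertices inside Z₀. Let G be a b-dense subgraph of Ĥ, let m̂ = m₀ + m₁ + m₂ + m₃, and suppose m₁, m₂, m₃ ≤ 2b + 2√m̂ and b ≥ 6√m̂. Then G contains a matching saturating at least min{m̂, m₀ + m̂ − 2b} − 5√m̂ vertices. If, furthermore, m₀ > 0 and min{m̂, m₀ + m̂ − 2b} ≥ 2b + 3√m̂, then G is connected. -/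
/-!
Fix a maximum matching `M` with unmatched set `U`. Two unmatched vertices admit no augmenting
path of length at most three, so their `G`-degrees sum to at most `|V(M)|`. Two vertices adjacent
in `Ĥ` have `Ĥ`-degrees summing to at least `m̂ + m₀ - 2`, so by `b`-density an unmatched pair
adjacent in `Ĥ` gives `|U| + m₀ ≤ 2b`. Otherwise, since all maximum matchings have the same size,
none leaves an `Ĥ`-adjacent pair unmatched; so if `|U| ≥ 2`, then `U` lies in one part `Z i`,
`i ≠ 0`, and no maximum matching leaves vertices both inside and outside `Z i` unmatched.
Exchanging matching edges along alternating paths of length two and four then shows that either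
the complement of `Z i` is matched into `Z i`, whence `|U| + m̂ = 2 mᵢ`, or some vertex outside
`Z i` and some unmatched vertex together miss at least `|U| + m̂ - mᵢ` of their
`Ĥ`-neighbours, whence `|U| + m₀ < 2b`.

For connectivity, a component `D` avoiding a vertex of `Z 0` has fewer than `b` vertices. An
edge of `Ĥ` inside `D` forces `m₀ + m̂ < 4b`; otherwise a vertex of `D` has fewer than `b`
neighbours in `Ĥ`, while the size bounds force every `Ĥ`-degree to be at least `b`.
-/

open SimpleGraph

/-- The graph Ĥ on a vertex set partitioned into parts `Z 0, Z 1, Z 2, Z 3`: its edges are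
all pairs of vertices lying in two different parts together with all pairs inside `Z 0`. -/
def hatH {V : Type*} (Z : Fin 4 → Set V) : SimpleGraph V where
  Adj u v := u ≠ v ∧ ((u ∈ Z 0 ∧ v ∈ Z 0) ∨ ∃ i j : Fin 4, i ≠ j ∧ u ∈ Z i ∧ v ∈ Z j)
  symm := ⟨by
    rintro u v ⟨hne, h⟩
    refine ⟨hne.symm, ?_⟩
    rcases h with ⟨h1, h2⟩ | ⟨i, j, hij, hi, hj⟩
    · exact Or.inl ⟨h2, h1⟩
    · exact Or.inr ⟨j, i, hij.symm, hj, hi⟩⟩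
  loopless := ⟨fun v h => h.1 rfl⟩

open Set

namespace SimpleGraph

variable {V : Type*} {G H : SimpleGraph V} {b : ℕ}

lemma ncard_lt_of_subset_neighborSet [Finite V] (hGH : G ≤ H)
    (hdense : ∀ v, (H.neighborSet v).ncard < (G.neighborSet v).ncard + b) {v : V} {S : Set V}
    (hS : S ⊆ H.neighborSet v) (hSG : ∀ w ∈ S, ¬G.Adj v w) : S.ncard < b := by
  have hle := ncard_le_ncard (s := S ∪ G.neighborSet v) (union_subset hS fun w hw => hGH hw)
    (toFinite _)
  rw [ncard_union_eq (t := G.neighborSet v) (Set.disjoint_left.mpr hSG)] at hle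
  have := hdense v
  omega

lemma ncard_neighborSet_lt_add_ncard [Finite V] (hGH : G ≤ H)
    (hdense : ∀ v, (H.neighborSet v).ncard < (G.neighborSet v).ncard + b) {D : Set V}
    (hD : ∀ v ∈ D, ∀ w, G.Adj v w → w ∈ D) {v : V} (hv : v ∈ D) :
    (H.neighborSet v).ncard < b + D.ncard := by
  have := ncard_lt_of_subset_neighborSet hGH hdense (S := H.neighborSet v \ D) sdiff_subset
    fun w hw hvw => hw.2 (hD v hv w hvw)
  have := ncard_le_ncard_sdiff_add_ncard (H.neighborSet v) D (toFinite _)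
  omega

namespace Subgraph

def IsMaximumMatching (M : G.Subgraph) : Prop :=
  M.IsMatching ∧ ∀ N : G.Subgraph, N.IsMatching → N.verts.ncard ≤ M.verts.ncard

variable {M N : G.Subgraph} {A : Set V} {a c u x y y' z z' : V}

lemma IsMatching.exists_partner (hM : M.IsMatching) :
    ∃ p : V → V, ∀ v ∈ M.verts, M.Adj v (p v) := by
  choose! p hp using fun v (hv : v ∈ M.verts) => (hM hv).exists
  exact ⟨p, hp⟩

lemma IsMatching.injOn_of_adj (hM : M.IsMatching) {p : V → V}
    (hp : ∀ v ∈ M.verts, M.Adj v (p v)) : InjOn p M.verts :=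
  fun v hv w hw h => hM.eq_of_adj_right (hp v hv) (h ▸ hp w hw)

lemma IsMatching.apply_apply_of_adj (hM : M.IsMatching) {p : V → V}
    (hp : ∀ v ∈ M.verts, M.Adj v (p v)) {v : V} (hv : v ∈ M.verts) : p (p v) = v :=
  hM.eq_of_adj_left (hp (p v) (hp v hv).snd_mem) (hp v hv).symm

lemma IsMatching.deleteVerts (hM : M.IsMatching) {s : Set V}
    (hs : ∀ v w, M.Adj v w → w ∈ s → v ∈ s) : (M.deleteVerts s).IsMatching := by
  rintro v ⟨hv, hvs⟩
  obtain ⟨w, hvw, hw⟩ := hM hv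
  refine ⟨w, deleteVerts_adj.mpr ⟨hv, hvs, hvw.snd_mem, fun hws => hvs (hs v w hvw hws), hvw⟩, ?_⟩
  exact fun w' hw' => hw w' (deleteVerts_adj.mp hw').2.2.2.2

lemma IsMatching.sup_subgraphOfAdj (hM : M.IsMatching) (ha : a ∉ M.verts) (hc : c ∉ M.verts)
    (hac : G.Adj a c) : (M ⊔ G.subgraphOfAdj hac).IsMatching := by
  refine hM.sup (.subgraphOfAdj hac) ?_
  rw [hM.support_eq_verts, (IsMatching.subgraphOfAdj hac).support_eq_verts, subgraphOfAdj_verts,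
    disjoint_insert_right, disjoint_singleton_right]
  exact ⟨ha, hc⟩

lemma IsMatching.exists_exchange (hM : M.IsMatching) (hxy : M.Adj x y) (ha : a ∉ M.verts)
    (hax : G.Adj a x) :
    ∃ M' : G.Subgraph, M'.IsMatching ∧ M'.verts = insert a (M.verts \ {y}) ∧
      ∀ v w, M.Adj v w → v ∉ ({x, y} : Set V) → w ∉ ({x, y} : Set V) → M'.Adj v w := by
  have hdel : (M.deleteVerts {x, y}).IsMatching := hM.deleteVerts fun v w hvw hw => by
    rcases hw with rfl | rfl
    · exact Or.inr (hM.eq_of_adj_right hvw hxy.symm)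
    · exact Or.inl (hM.eq_of_adj_right hvw hxy)
  have hx : x ∈ M.verts := hxy.fst_mem
  have hxy' : x ≠ y := hxy.ne
  refine ⟨_, hdel.sup_subgraphOfAdj (by simp [ha]) (by simp) hax, ?_,
    fun v w hvw hv hw => sup_adj.mpr (Or.inl (deleteVerts_adj.mpr
      ⟨hvw.fst_mem, hv, hvw.snd_mem, hw, hvw⟩))⟩
  ext v
  simp only [verts_sup, deleteVerts_verts, subgraphOfAdj_verts, mem_union, mem_sdiff,
    mem_insert_iff, mem_singleton_iff]
  constructor
  · rintro (⟨hv, hvxy⟩ | rfl | rfl) <;> tauto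
  · rintro (rfl | ⟨hv, hvy⟩) <;> by_cases hvx : v = x <;> tauto

lemma IsMaximumMatching.of_ncard_eq (hM : M.IsMaximumMatching) (hN : N.IsMatching)
    (h : N.verts.ncard = M.verts.ncard) : N.IsMaximumMatching :=
  ⟨hN, fun N' hN' => h ▸ hM.2 N' hN'⟩

lemma IsMaximumMatching.ncard_verts_eq (hM : M.IsMaximumMatching) (hN : N.IsMaximumMatching) :
    N.verts.ncard = M.verts.ncard :=
  le_antisymm (hM.2 N hN.1) (hN.2 M hM.1)

lemma IsMaximumMatching.not_adj_of_partner_notMem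
    (hA : ∀ N : G.Subgraph, N.IsMaximumMatching → ∀ u ∉ N.verts, ∀ z ∉ N.verts, u ∈ A → z ∈ A)
    (hM : M.IsMaximumMatching) (hu : u ∉ M.verts) (hx : x ∉ M.verts) (hux : u ≠ x)
    (huA : u ∈ A) (hzz' : M.Adj z z') (hz' : z' ∉ A) : ¬G.Adj x z := by
  intro hxz
  obtain ⟨M', hM', hv, -⟩ := hM.1.exists_exchange hzz' hx hxz
  have hz'M : z' ∈ M.verts := hzz'.snd_mem
  refine hz' (hA M' (hM.of_ncard_eq hM' (by rw [hv, ncard_exchange hx hz'M])) u ?_ z' ?_ huA)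
  · simp [hv, hux, hu]
  · simp only [hv, mem_insert_iff, mem_sdiff, mem_singleton_iff, not_true_eq_false,
      and_false, or_false]
    rintro rfl
    exact hx hz'M

lemma IsMaximumMatching.not_adj_of_adj_of_partner_notMem
    (hA : ∀ N : G.Subgraph, N.IsMaximumMatching → ∀ u ∉ N.verts, ∀ z ∉ N.verts, u ∈ A → z ∈ A)
    (hM : M.IsMaximumMatching) (hu : u ∉ M.verts) (hx : x ∉ M.verts) (hux : u ≠ x)
    (huA : u ∈ A) (hxy : G.Adj x y) (hyy' : M.Adj y y') (hzz' : M.Adj z z') (hz' : z' ∉ A)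
    (hz : z ∉ ({y, y'} : Set V)) (hz'y : z' ∉ ({y, y'} : Set V)) : ¬G.Adj y' z := by
  obtain ⟨M₁, hM₁, hv, hkeep⟩ := hM.1.exists_exchange hyy' hx hxy
  have hy'M : y' ∈ M.verts := hyy'.snd_mem
  refine (hM.of_ncard_eq hM₁ (by rw [hv, ncard_exchange hx hy'M])).not_adj_of_partner_notMem
    hA ?_ ?_ ?_ huA (hkeep z z' hzz' hz hz'y) hz'
  · simp [hv, hux, hu]
  · simp only [hv, mem_insert_iff, mem_sdiff, mem_singleton_iff, not_true_eq_false,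
      and_false, or_false]
    rintro rfl
    exact hx hy'M
  · rintro rfl
    exact hu hy'M

section Finite

variable [Finite V]

lemma IsMaximumMatching.not_insert_insert_subset (hM : M.IsMaximumMatching) (ha : a ∉ M.verts)
    (hc : c ∉ M.verts) (hac : a ≠ c) (hN : N.IsMatching) :
    ¬insert a (insert c M.verts) ⊆ N.verts := by
  intro h
  have hle := ncard_le_ncard h (toFinite _)
  rw [ncard_insert_of_notMem (by simp [hac, ha]), ncard_insert_of_notMem hc] at hle
  have := hM.2 N hN
  omega

lemma IsMaximumMatching.not_adj (hM : M.IsMaximumMatching) (ha : a ∉ M.verts)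
    (hc : c ∉ M.verts) : ¬G.Adj a c := fun hac =>
  hM.not_insert_insert_subset ha hc hac.ne (hM.1.sup_subgraphOfAdj ha hc hac) (by
    rw [verts_sup, subgraphOfAdj_verts]
    exact insert_subset (by simp) (insert_subset (by simp) subset_union_left))

lemma IsMaximumMatching.not_adj_of_adj (hM : M.IsMaximumMatching) (hxy : M.Adj x y)
    (ha : a ∉ M.verts) (hc : c ∉ M.verts) (hac : a ≠ c) (hax : G.Adj a x) : ¬G.Adj c y := by
  intro hcy
  obtain ⟨M₁, hM₁, hv, -⟩ := hM.1.exists_exchange hxy ha hax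
  have hy : y ∈ M.verts := hxy.snd_mem
  have hc₁ : c ∉ M₁.verts := by simp [hv, hac.symm, hc]
  have hy₁ : y ∉ M₁.verts := by
    simp only [hv, mem_insert_iff, mem_sdiff, mem_singleton_iff, not_true_eq_false, and_false,
      or_false]
    rintro rfl
    exact ha hy
  refine hM.not_insert_insert_subset ha hc hac (hM₁.sup_subgraphOfAdj hc₁ hy₁ hcy) ?_
  rw [verts_sup, subgraphOfAdj_verts, hv]
  intro v
  simp only [mem_insert_iff, mem_union, mem_sdiff, mem_singleton_iff]
  by_cases hvy : v = y <;> tauto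

lemma IsMaximumMatching.ncard_neighborSet_add_le (hM : M.IsMaximumMatching) (ha : a ∉ M.verts)
    (hc : c ∉ M.verts) (hac : a ≠ c) :
    (G.neighborSet a).ncard + (G.neighborSet c).ncard ≤ M.verts.ncard := by
  obtain ⟨p, hp⟩ := hM.1.exists_partner
  have hsub : ∀ {u}, u ∉ M.verts → G.neighborSet u ⊆ M.verts := fun hu w hw =>
    by_contra fun hw' => hM.not_adj hu hw' hw
  set Na := G.neighborSet a
  set Nc := G.neighborSet c
  have hpart : Disjoint (p '' (Na ∩ Nc)) (Na ∪ Nc) := by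
    rw [Set.disjoint_left]
    rintro _ ⟨v, ⟨hva, hvc⟩, rfl⟩ (h | h)
    · exact hM.not_adj_of_adj (hp v (hsub ha hva)).symm ha hc hac h hvc
    · exact hM.not_adj_of_adj (hp v (hsub ha hva)) ha hc hac hva h
  have hinj : InjOn p (Na ∩ Nc) :=
    (hM.1.injOn_of_adj hp).mono fun v hv => hsub ha hv.1
  calc Na.ncard + Nc.ncard = (Na ∪ Nc).ncard + (Na ∩ Nc).ncard :=
        (ncard_union_add_ncard_inter _ _).symm
    _ = (p '' (Na ∩ Nc) ∪ (Na ∪ Nc)).ncard := by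
        rw [ncard_union_eq hpart, hinj.ncard_image, add_comm]
    _ ≤ M.verts.ncard := by
        refine ncard_le_ncard (union_subset ?_ (union_subset (hsub ha) (hsub hc))) (toFinite _)
        rintro _ ⟨v, hv, rfl⟩
        exact (hp v (hsub ha hv.1)).snd_mem

lemma IsMaximumMatching.ncard_union_lt (hGH : G ≤ H)
    (hdense : ∀ v, (H.neighborSet v).ncard < (G.neighborSet v).ncard + b)
    (hAH : ∀ u ∈ A, H.neighborSet u = Aᶜ)
    (hA : ∀ N : G.Subgraph, N.IsMaximumMatching → ∀ u ∉ N.verts, ∀ z ∉ N.verts, u ∈ A → z ∈ A)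
    (hM : M.IsMaximumMatching) (hUA : M.vertsᶜ ⊆ A) (hU : 1 < M.vertsᶜ.ncard) {p : V → V}
    (hp : ∀ v ∈ M.verts, M.Adj v (p v)) (hz : z ∉ A) (hzM : z ∈ M.verts) (hpz : p z ∉ A)
    {S : Set V} (hS : ∀ v ∈ S, v ∈ M.verts ∩ A ∧ ∃ x ∉ M.verts, G.Adj x (p v)) :
    (M.vertsᶜ ∪ S).ncard < b := by
  refine ncard_lt_of_subset_neighborSet hGH hdense (v := z) ?_ ?_
  · intro w hw
    have hwA : w ∈ A := hw.elim (fun h => hUA h) fun h => (hS w h).1.2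
    have hwz : z ∈ H.neighborSet w := by rwa [hAH w hwA]
    exact hwz.symm
  rintro w (hw | hw) hzw
  · obtain ⟨u, hu, huw⟩ := exists_ne_of_one_lt_ncard hU w
    exact hM.not_adj_of_partner_notMem hA hu hw huw (hUA hu) (hp z hzM) hpz hzw.symm
  · obtain ⟨⟨hwM, hwA⟩, x, hx, hxw⟩ := hS w hw
    obtain ⟨u, hu, hux⟩ := exists_ne_of_one_lt_ncard hU x
    refine hM.not_adj_of_adj_of_partner_notMem hA hu hx hux (hUA hu) hxw (hp w hwM).symm
      (hp z hzM) hpz ?_ ?_ hzw.symm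
    · rintro (h | rfl)
      · rw [h, hM.1.apply_apply_of_adj hp hwM] at hpz
        exact hpz hwA
      · exact hz hwA
    · rintro (h | h)
      · exact hz (hM.1.injOn_of_adj hp hzM hwM h ▸ hwA)
      · exact hpz (h ▸ hwA)

lemma IsMaximumMatching.ncard_sdiff_image_lt (hGH : G ≤ H)
    (hdense : ∀ v, (H.neighborSet v).ncard < (G.neighborSet v).ncard + b)
    (hAH : ∀ u ∈ A, H.neighborSet u = Aᶜ)
    (hA : ∀ N : G.Subgraph, N.IsMaximumMatching → ∀ u ∉ N.verts, ∀ z ∉ N.verts, u ∈ A → z ∈ A)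
    (hM : M.IsMaximumMatching) (hUA : M.vertsᶜ ⊆ A) (hU : 1 < M.vertsᶜ.ncard) {p : V → V}
    (hp : ∀ v ∈ M.verts, M.Adj v (p v)) (hx : x ∉ M.verts) {S : Set V}
    (hS : ∀ v ∈ M.verts ∩ A, (∃ x ∉ M.verts, G.Adj x (p v)) → v ∈ S) :
    (Aᶜ \ p '' S).ncard < b := by
  refine ncard_lt_of_subset_neighborSet hGH hdense (v := x) (fun w hw => ?_) ?_
  · rw [hAH x (hUA hx)]
    exact hw.1
  rintro w ⟨hwA, hwS⟩ hxw
  have hwM : w ∈ M.verts := by_contra fun h => hwA (hUA h)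
  have hpp := hM.1.apply_apply_of_adj hp hwM
  by_cases hpw : p w ∈ A
  · exact hwS ⟨p w, hS (p w) ⟨(hp w hwM).snd_mem, hpw⟩ ⟨x, hx, hpp.symm ▸ hxw⟩, hpp⟩
  · obtain ⟨u, hu, hux⟩ := exists_ne_of_one_lt_ncard hU x
    exact hM.not_adj_of_partner_notMem hA hu hx hux (hUA hu) (hp w hwM) hpw hxw

/-- Either every vertex outside `A` is matched into `A`, or some `z ∉ A` is matched outside `A`;
then `z` misses the unmatched vertices and the `A`-vertices whose partner sees one, while an
unmatched vertex misses everything else outside `A`. -/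
lemma IsMaximumMatching.ncard_compl_add_ncard_compl_lt_or_eq (hGH : G ≤ H)
    (hdense : ∀ v, (H.neighborSet v).ncard < (G.neighborSet v).ncard + b)
    (hAH : ∀ u ∈ A, H.neighborSet u = Aᶜ)
    (hA : ∀ N : G.Subgraph, N.IsMaximumMatching → ∀ u ∉ N.verts, ∀ z ∉ N.verts, u ∈ A → z ∈ A)
    (hM : M.IsMaximumMatching) (hUA : M.vertsᶜ ⊆ A) (hU : 1 < M.vertsᶜ.ncard) :
    M.vertsᶜ.ncard + Aᶜ.ncard < 2 * b ∨ M.vertsᶜ.ncard + Aᶜ.ncard = A.ncard := by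
  obtain ⟨p, hp⟩ := hM.1.exists_partner
  have hinj := hM.1.injOn_of_adj hp
  have hpp : ∀ {v}, v ∈ M.verts → p (p v) = v := hM.1.apply_apply_of_adj hp
  set X := M.verts ∩ A
  have hXA : p '' X ⊆ Aᶜ := by
    rintro _ ⟨v, ⟨hvM, hvA⟩, rfl⟩
    have hH : p v ∈ H.neighborSet v := hGH (M.adj_sub (hp v hvM))
    rwa [hAH v hvA] at hH
  have hAXU : A.ncard = X.ncard + M.vertsᶜ.ncard := by
    rw [← ncard_union_eq (s := X) (t := M.vertsᶜ) (Set.disjoint_left.mpr fun v hv hvU => hvU hv.1)]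
    congr 1
    ext v
    by_cases hv : v ∈ M.verts
    · simp [X, hv]
    · simp [X, hv, hUA hv]
  have hX : (p '' X).ncard = X.ncard := (hinj.mono inter_subset_left).ncard_image
  by_cases hmatched : Aᶜ ⊆ p '' X
  · right
    rw [Subset.antisymm hmatched hXA]
    omega
  left
  obtain ⟨z, hzA, hzX⟩ := not_subset.mp hmatched
  have hzM : z ∈ M.verts := by_contra fun h => hzA (hUA h)
  have hpz : p z ∉ A := fun h => hzX ⟨p z, ⟨(hp z hzM).snd_mem, h⟩, hpp hzM⟩
  obtain ⟨x, hx⟩ : M.vertsᶜ.Nonempty := nonempty_of_ncard_ne_zero (by omega)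
  set S := {v ∈ X | ∃ x ∉ M.verts, G.Adj x (p v)}
  have h₁ := hM.ncard_union_lt hGH hdense hAH hA hUA hU hp hzA hzM hpz (S := S) fun v hv => hv
  have h₂ := hM.ncard_sdiff_image_lt hGH hdense hAH hA hUA hU hp hx (S := S)
    fun v hv hpv => ⟨hv, hpv⟩
  rw [ncard_union_eq (s := M.vertsᶜ) (t := S) (Set.disjoint_left.mpr fun v hv hvS => hv hvS.1.1)]
    at h₁
  have := ncard_le_ncard_sdiff_add_ncard Aᶜ (p '' S) (toFinite _)
  have := (hinj.mono fun v hv => hv.1.1).ncard_image (s := S)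
  omega

end Finite

end Subgraph

lemma exists_isMaximumMatching [Finite V] (G : SimpleGraph V) :
    ∃ M : G.Subgraph, M.IsMaximumMatching := by
  obtain ⟨M, hM, hmax⟩ := exists_max_image {M : G.Subgraph | M.IsMatching}
    (fun M => M.verts.ncard) (toFinite _) ⟨⊥, fun _ hv => hv.elim⟩
  exact ⟨M, hM, hmax⟩

end SimpleGraph

section HatH

variable {V : Type*} {Z : Fin 4 → Set V} {u v w : V} {i j : Fin 4}

lemma eq_of_mem_of_disjoint (hdisj : ∀ i j : Fin 4, i ≠ j → Disjoint (Z i) (Z j)) (hi : v ∈ Z i)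
    (hj : v ∈ Z j) : i = j :=
  by_contra fun h => Set.disjoint_left.mp (hdisj i j h) hi hj

lemma hatH_adj_of_mem_zero (hcov : ⋃ i, Z i = univ) (hw : w ∈ Z 0) (hvw : v ≠ w) :
    (hatH Z).Adj v w := by
  obtain ⟨j, hj⟩ := iUnion_eq_univ_iff.mp hcov v
  refine ⟨hvw, ?_⟩
  by_cases hj0 : j = 0
  · exact Or.inl ⟨hj0 ▸ hj, hw⟩
  · exact Or.inr ⟨j, 0, hj0, hj, hw⟩

lemma hatH_neighborSet_of_mem_zero (hcov : ⋃ i, Z i = univ) (hv : v ∈ Z 0) :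
    (hatH Z).neighborSet v = {v}ᶜ :=
  Set.ext fun _ => ⟨fun (h : (hatH Z).Adj v _) => h.ne.symm,
    fun (h : _ ≠ v) => (hatH_adj_of_mem_zero hcov hv h).symm⟩

lemma hatH_neighborSet_of_mem (hcov : ⋃ i, Z i = univ)
    (hdisj : ∀ i j : Fin 4, i ≠ j → Disjoint (Z i) (Z j)) (hi : i ≠ 0) (hv : v ∈ Z i) :
    (hatH Z).neighborSet v = (Z i)ᶜ := by
  ext w
  constructor
  · rintro ⟨-, ⟨hv0, -⟩ | ⟨k, l, hkl, hvk, hwl⟩⟩ hwi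
    · exact hi (eq_of_mem_of_disjoint hdisj hv hv0)
    · exact hkl ((eq_of_mem_of_disjoint hdisj hvk hv).trans (eq_of_mem_of_disjoint hdisj hwi hwl))
  · intro hwi
    obtain ⟨j, hj⟩ := iUnion_eq_univ_iff.mp hcov w
    exact ⟨fun h => hwi (h ▸ hv), Or.inr ⟨i, j, fun h => hwi (h ▸ hj), hv, hj⟩⟩

lemma exists_mem_of_not_hatH_adj (hcov : ⋃ i, Z i = univ)
    (hdisj : ∀ i j : Fin 4, i ≠ j → Disjoint (Z i) (Z j)) (huv : u ≠ v)
    (h : ¬(hatH Z).Adj u v) : ∃ i ≠ 0, u ∈ Z i ∧ v ∈ Z i := by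
  obtain ⟨i, hi⟩ := iUnion_eq_univ_iff.mp hcov u
  by_cases hi0 : i = 0
  · exact absurd (hatH_adj_of_mem_zero hcov (hi0 ▸ hi) huv.symm).symm h
  · refine ⟨i, hi0, hi, by_contra fun hv => h ?_⟩
    change v ∈ (hatH Z).neighborSet u
    rwa [hatH_neighborSet_of_mem hcov hdisj hi0 hi]

lemma hatH_neighborSet_union_of_adj (hcov : ⋃ i, Z i = univ)
    (hdisj : ∀ i j : Fin 4, i ≠ j → Disjoint (Z i) (Z j)) (huv : (hatH Z).Adj u v) :
    (hatH Z).neighborSet u ∪ (hatH Z).neighborSet v = univ := by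
  refine eq_univ_of_forall fun w => by_contra fun hw => ?_
  rw [mem_union, not_or] at hw
  obtain ⟨i, hi0, hui, hwi⟩ := exists_mem_of_not_hatH_adj hcov hdisj
    (by rintro rfl; exact hw.2 huv.symm) hw.1
  obtain ⟨j, -, hvj, hwj⟩ := exists_mem_of_not_hatH_adj hcov hdisj
    (by rintro rfl; exact hw.1 huv) hw.2
  obtain rfl := eq_of_mem_of_disjoint hdisj hwi hwj
  have hv : v ∈ (hatH Z).neighborSet u := huv
  rw [hatH_neighborSet_of_mem hcov hdisj hi0 hui] at hv
  exact hv hvj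

/-- The two neighbourhoods cover everything and share `Z 0 \ {u, v}`. -/
lemma ncard_add_card_le_hatH_degree_add [Finite V] (hcov : ⋃ i, Z i = univ)
    (hdisj : ∀ i j : Fin 4, i ≠ j → Disjoint (Z i) (Z j)) (huv : (hatH Z).Adj u v) :
    (Z 0).ncard + Nat.card V ≤
      ((hatH Z).neighborSet u).ncard + ((hatH Z).neighborSet v).ncard + 2 := by
  have hinter : Z 0 \ {u, v} ⊆ (hatH Z).neighborSet u ∩ (hatH Z).neighborSet v :=
    fun w ⟨hw, hwuv⟩ => ⟨hatH_adj_of_mem_zero hcov hw fun h => hwuv (by simp [h]),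
      hatH_adj_of_mem_zero hcov hw fun h => hwuv (by simp [h])⟩
  have h1 := ncard_union_add_ncard_inter ((hatH Z).neighborSet u) ((hatH Z).neighborSet v)
  rw [hatH_neighborSet_union_of_adj hcov hdisj huv, ncard_univ] at h1
  have h2 := ncard_le_ncard hinter (toFinite _)
  have h3 := ncard_le_ncard_sdiff_add_ncard (Z 0) {u, v} (toFinite _)
  have h4 : ({u, v} : Set V).ncard ≤ 2 := (ncard_insert_le u {v}).trans (by rw [ncard_singleton])
  omega

lemma card_eq_sum_ncard [Finite V] (hcov : ⋃ i, Z i = univ)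
    (hdisj : ∀ i j : Fin 4, i ≠ j → Disjoint (Z i) (Z j)) :
    Nat.card V = (Z 0).ncard + (Z 1).ncard + (Z 2).ncard + (Z 3).ncard := by
  rw [← ncard_univ, ← hcov, ncard_iUnion_of_finite (fun _ => toFinite _) fun i j h => hdisj i j h,
    finsum_eq_sum_of_fintype, Fin.sum_univ_four]

lemma ncard_zero_le_ncard_compl [Finite V] (hdisj : ∀ i j : Fin 4, i ≠ j → Disjoint (Z i) (Z j))
    (hi : i ≠ 0) : (Z 0).ncard ≤ (Z i)ᶜ.ncard :=
  ncard_le_ncard (hdisj 0 i hi.symm).subset_compl_right (toFinite _)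

end HatH

section HatHGraph

variable {V : Type*} [Finite V] {Z : Fin 4 → Set V} {G : SimpleGraph V} {b : ℕ}

lemma SimpleGraph.Subgraph.IsMaximumMatching.hatH_ncard_compl_verts_cases
    (hcov : ⋃ i, Z i = univ) (hdisj : ∀ i j : Fin 4, i ≠ j → Disjoint (Z i) (Z j))
    (hsub : G ≤ hatH Z)
    (hdense : ∀ v, ((hatH Z).neighborSet v).ncard < (G.neighborSet v).ncard + b)
    {M : G.Subgraph} (hM : M.IsMaximumMatching) :
    M.vertsᶜ.ncard ≤ 1 ∨ M.vertsᶜ.ncard + (Z 0).ncard ≤ 2 * b ∨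
      ∃ i ≠ 0, M.vertsᶜ.ncard + Nat.card V = 2 * (Z i).ncard := by
  by_contra! h
  obtain ⟨hU, hb, hparts⟩ := h
  have hMU := ncard_add_ncard_compl M.verts
  have hindep : ∀ N : G.Subgraph, N.IsMaximumMatching →
      ∀ u ∉ N.verts, ∀ v ∉ N.verts, ¬(hatH Z).Adj u v := by
    intro N hN u hu v hv huv
    have := ncard_add_card_le_hatH_degree_add hcov hdisj huv
    have := hN.ncard_neighborSet_add_le hu hv huv.ne
    have := hdense u
    have := hdense v
    have := hN.ncard_verts_eq hM
    omega
  obtain ⟨u₁, u₂, hu₁, hu₂, hne⟩ := (one_lt_ncard_iff (toFinite _)).mp hU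
  obtain ⟨i, hi0, hu₁i, -⟩ :=
    exists_mem_of_not_hatH_adj hcov hdisj hne (hindep M hM u₁ hu₁ u₂ hu₂)
  have hAH : ∀ u ∈ Z i, (hatH Z).neighborSet u = (Z i)ᶜ :=
    fun u hu => hatH_neighborSet_of_mem hcov hdisj hi0 hu
  have hA : ∀ N : G.Subgraph, N.IsMaximumMatching →
      ∀ u ∉ N.verts, ∀ z ∉ N.verts, u ∈ Z i → z ∈ Z i := by
    refine fun N hN u hu z hz hui => by_contra fun hzi => hindep N hN u hu z hz ?_
    change z ∈ (hatH Z).neighborSet u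
    rwa [hAH u hui]
  have hZi := ncard_add_ncard_compl (Z i)
  have := ncard_zero_le_ncard_compl hdisj hi0
  rcases hM.ncard_compl_add_ncard_compl_lt_or_eq hsub hdense hAH hA
    (fun z hz => hA M hM u₁ hu₁ z hz hu₁i) hU with h | h
  · omega
  · exact hparts i hi0 (by omega)

lemma hatH_exists_isMatching (hcov : ⋃ i, Z i = univ)
    (hdisj : ∀ i j : Fin 4, i ≠ j → Disjoint (Z i) (Z j)) (hsub : G ≤ hatH Z)
    (hdense : ∀ v, ((hatH Z).neighborSet v).ncard < (G.neighborSet v).ncard + b)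
    (hm : ∀ i : Fin 4, i ≠ 0 → ((Z i).ncard : ℝ) ≤ 2 * b + 2 * √(Nat.card V)) :
    ∃ M : G.Subgraph, M.IsMatching ∧
      min (Nat.card V : ℝ) ((Z 0).ncard + Nat.card V - 2 * b) - 5 * √(Nat.card V) ≤
        M.verts.ncard := by
  obtain ⟨M, hM⟩ := exists_isMaximumMatching G
  refine ⟨M, hM.1, ?_⟩
  have hMU := ncard_add_ncard_compl M.verts
  have hMUR : (M.verts.ncard : ℝ) + M.vertsᶜ.ncard = Nat.card V := by exact_mod_cast hMU
  have := min_le_left (Nat.card V : ℝ) ((Z 0).ncard + Nat.card V - 2 * b)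
  have := min_le_right (Nat.card V : ℝ) ((Z 0).ncard + Nat.card V - 2 * b)
  have := Real.sqrt_nonneg (Nat.card V)
  rcases hM.hatH_ncard_compl_verts_cases hcov hdisj hsub hdense with h | h | ⟨i, hi0, h⟩
  · have hsq : M.vertsᶜ.ncard ^ 2 ≤ Nat.card V := by nlinarith
    have : (M.vertsᶜ.ncard : ℝ) ≤ √(Nat.card V) :=
      (Real.le_sqrt (by positivity) (by positivity)).mpr (by exact_mod_cast hsq)
    linarith
  · have : (M.vertsᶜ.ncard : ℝ) + (Z 0).ncard ≤ 2 * b := by exact_mod_cast h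
    linarith
  · have hZi := ncard_add_ncard_compl (Z i)
    have : (Z 0).ncard + (Z i).ncard ≤ Nat.card V := by
      have := ncard_zero_le_ncard_compl hdisj hi0
      omega
    have : ((Z 0).ncard : ℝ) + (Z i).ncard ≤ Nat.card V := by exact_mod_cast this
    have : (M.vertsᶜ.ncard : ℝ) + Nat.card V = 2 * (Z i).ncard := by exact_mod_cast h
    have := hm i hi0
    linarith

lemma le_ncard_hatH_neighborSet (hcov : ⋃ i, Z i = univ)
    (hdisj : ∀ i j : Fin 4, i ≠ j → Disjoint (Z i) (Z j))
    (hm : ∀ i : Fin 4, i ≠ 0 → ((Z i).ncard : ℝ) ≤ 2 * b + 2 * √(Nat.card V))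
    (hbig : 2 * b + 3 * √(Nat.card V) ≤ (Z 0).ncard + Nat.card V - 2 * b) (v : V) :
    b ≤ ((hatH Z).neighborSet v).ncard := by
  have := Real.sqrt_nonneg (Nat.card V)
  have hZ0V : (Z 0).ncard ≤ Nat.card V :=
    (ncard_le_ncard (subset_univ _) (toFinite _)).trans_eq (ncard_univ V)
  have hZ0VR : ((Z 0).ncard : ℝ) ≤ Nat.card V := by exact_mod_cast hZ0V
  obtain ⟨i, hi⟩ := iUnion_eq_univ_iff.mp hcov v
  by_cases hi0 : i = 0
  · subst hi0
    rw [hatH_neighborSet_of_mem_zero hcov hi]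
    have hsplit := ncard_add_ncard_compl {v}
    rw [ncard_singleton] at hsplit
    have : 2 * (b : ℝ) ≤ Nat.card V := by linarith
    have : 2 * b ≤ Nat.card V := by exact_mod_cast this
    omega
  · rw [hatH_neighborSet_of_mem hcov hdisj hi0 hi]
    by_contra! hlt
    have := ncard_add_ncard_compl (Z i)
    have := ncard_zero_le_ncard_compl hdisj hi0
    have : ((Z 0).ncard : ℝ) + Nat.card V + 2 ≤ 2 * b + (Z i).ncard := by
      exact_mod_cast (show (Z 0).ncard + Nat.card V + 2 ≤ 2 * b + (Z i).ncard by omega)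
    have := hm i hi0
    linarith

lemma hatH_connected (hcov : ⋃ i, Z i = univ)
    (hdisj : ∀ i j : Fin 4, i ≠ j → Disjoint (Z i) (Z j)) (hsub : G ≤ hatH Z)
    (hdense : ∀ v, ((hatH Z).neighborSet v).ncard < (G.neighborSet v).ncard + b)
    (hm : ∀ i : Fin 4, i ≠ 0 → ((Z i).ncard : ℝ) ≤ 2 * b + 2 * √(Nat.card V))
    (hZ0 : (Z 0).Nonempty)
    (hbig : 2 * b + 3 * √(Nat.card V) ≤ (Z 0).ncard + Nat.card V - 2 * b) :
    G.Connected := by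
  obtain ⟨z₀, hz₀⟩ := hZ0
  refine (connected_iff_exists_forall_reachable G).mpr ⟨z₀, fun v₀ => by_contra fun hv₀ => ?_⟩
  set D := {w | G.Reachable v₀ w}
  have hv₀D : v₀ ∈ D := Reachable.refl v₀
  have hclosed : ∀ v ∈ D, ∀ w, G.Adj v w → w ∈ D := fun v hv w hvw =>
    Reachable.trans hv hvw.reachable
  have hD : D.ncard < b := by
    refine ncard_lt_of_subset_neighborSet hsub hdense (v := z₀) (fun w hw => ?_)
      fun w hw hz₀w => hv₀ (hz₀w.reachable.trans hw.symm)
    rw [hatH_neighborSet_of_mem_zero hcov hz₀]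
    rintro rfl
    exact hv₀ hw.symm
  by_cases hadj : ∃ u ∈ D, ∃ v ∈ D, (hatH Z).Adj u v
  · obtain ⟨u, hu, v, hv, huv⟩ := hadj
    have := ncard_add_card_le_hatH_degree_add hcov hdisj huv
    have := ncard_neighborSet_lt_add_ncard hsub hdense hclosed hu
    have := ncard_neighborSet_lt_add_ncard hsub hdense hclosed hv
    have : ((Z 0).ncard : ℝ) + Nat.card V + 2 ≤ 4 * b := by
      exact_mod_cast (show (Z 0).ncard + Nat.card V + 2 ≤ 4 * b by omega)
    have := Real.sqrt_nonneg (Nat.card V)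
    linarith
  push Not at hadj
  have hdeg : ((hatH Z).neighborSet v₀).ncard < b :=
    ncard_lt_of_subset_neighborSet hsub hdense subset_rfl fun w hw hvw =>
      hadj v₀ hv₀D w (hclosed v₀ hv₀D w hvw) hw
  exact (le_ncard_hatH_neighborSet hcov hdisj hm hbig v₀).not_gt hdeg

end HatHGraph

theorem stmt10_general {V : Type*} [Fintype V] (Z : Fin 4 → Set V) (m : Fin 4 → ℕ) (b : ℕ)
    (hcov : (⋃ i, Z i) = Set.univ)
    (hdisj : ∀ i j : Fin 4, i ≠ j → Disjoint (Z i) (Z j))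
    (hsize : ∀ i, (Z i).ncard = m i)
    (G : SimpleGraph V) (hsub : G ≤ hatH Z)
    (hdense : ∀ v : V, ((hatH Z).neighborSet v).ncard < (G.neighborSet v).ncard + b)
    (mhat : ℕ) (hmhat : mhat = m 0 + m 1 + m 2 + m 3)
    (hm : ∀ i : Fin 4, i ≠ 0 → (m i : ℝ) ≤ 2 * b + 2 * Real.sqrt mhat) :
    (∃ M : G.Subgraph, M.IsMatching ∧
        min (mhat : ℝ) ((m 0 : ℝ) + mhat - 2 * b) - 5 * Real.sqrt mhat ≤ M.verts.ncard) ∧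
      (0 < m 0 → 2 * b + 3 * Real.sqrt mhat ≤ min (mhat : ℝ) ((m 0 : ℝ) + mhat - 2 * b) →
        G.Connected) := by
  obtain rfl : m = fun i => (Z i).ncard := funext fun i => (hsize i).symm
  obtain rfl : mhat = Nat.card V := hmhat.trans (card_eq_sum_ncard hcov hdisj).symm
  refine ⟨hatH_exists_isMatching hcov hdisj hsub hdense hm, fun hm0 hbig => ?_⟩
  exact hatH_connected hcov hdisj hsub hdense hm (nonempty_of_ncard_ne_zero hm0.ne')
    (hbig.trans (min_le_right _ _))

/-- Let G be a b-dense subgraph of Ĥ(m₀; m₁, m₂, m₃), m̂ = m₀+m₁+m₂+m₃, with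
m₁, m₂, m₃ ≤ 2b + 2√m̂ and b ≥ 6√m̂. Then G contains a matching saturating at least
min{m̂, m₀ + m̂ − 2b} − 5√m̂ vertices; and if moreover m₀ > 0 and
min{m̂, m₀ + m̂ − 2b} ≥ 2b + 3√m̂, then G is connected. -/
theorem stmt10 {V : Type*} [Fintype V] (Z : Fin 4 → Set V) (m : Fin 4 → ℕ) (b : ℕ)
    (hcov : (⋃ i, Z i) = Set.univ)
    (hdisj : ∀ i j : Fin 4, i ≠ j → Disjoint (Z i) (Z j))
    (hsize : ∀ i, (Z i).ncard = m i)
    (G : SimpleGraph V) (hsub : G ≤ hatH Z)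
    (hdense : ∀ v : V, ((hatH Z).neighborSet v).ncard < (G.neighborSet v).ncard + b)
    (mhat : ℕ) (hmhat : mhat = m 0 + m 1 + m 2 + m 3)
    (hm : ∀ i : Fin 4, i ≠ 0 → (m i : ℝ) ≤ 2 * b + 2 * Real.sqrt mhat)
    (hb : 6 * Real.sqrt mhat ≤ b) :
    (∃ M : G.Subgraph, M.IsMatching ∧
        min (mhat : ℝ) ((m 0 : ℝ) + mhat - 2 * b) - 5 * Real.sqrt mhat ≤ M.verts.ncard) ∧
      (0 < m 0 → 2 * b + 3 * Real.sqrt mhat ≤ min (mhat : ℝ) ((m 0 : ℝ) + mhat - 2 * b) →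
        G.Connected) :=
  stmt10_general Z m b hcov hdisj hsize G hsub hdense mhat hmhat hm
end

section
/- Let G = (V,E) be a graph on N vertices with minimum degree at least N − N/8, whose edges are coloured with three colours in such a way that G contains no monochromatic component with a matching saturating at least N/2 vertices, and all monochromatic components of G have fewer than 3N/4 vertices. Then for each pair of monochromatic components F₁ = (V₁,E₁) of the first colour and F₂ = (V₂,E₂) of the second colour with |V₁|, |V₂| ≥ N/2, there exists a monochromatic component F₃ = (V₃,E₃) of the third colour such that V = V₁ ∪ V₂ ∪ V₃. -/
open SimpleGraph

/-!
Write `S₁`, `S₂` for the supports of `K₁`, `K₂` and `d = N/8 - 1`, so that every vertex has at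
most `d` non-neighbours. An edge with exactly one end in `S₁` cannot have colour 0 and one with
exactly one end in `S₂` cannot have colour 1, so an edge doing both has colour 2.

If `|S₁ ∩ S₂| ≤ 2d`, then `S₁ \ S₂` and `S₂ \ S₁` both have more than `2d` vertices and every
`G`-edge between them has colour 2. Hall's condition holds for this almost complete bipartite
graph, and two vertices of one side have a common neighbour on the other, so colour 2 has a
matching saturating more than `N/2` vertices inside one component, which is excluded.

Hence `|S₁ ∩ S₂| > 2d`. Any two vertices outside `S₁ ∪ S₂` then have a common neighbour in
`S₁ ∩ S₂`, joined to both by colour-2 edges, so one colour-2 component covers the rest.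
-/

open Finset

namespace SimpleGraph

variable {V : Type*} [DecidableEq V] {H : SimpleGraph V} [DecidableRel H.Adj]

theorem exists_adj_adj_of_card_filter_not_adj_add_lt {B : Finset V} {u w : V}
    (h : #{x ∈ B | ¬H.Adj u x} + #{x ∈ B | ¬H.Adj w x} < #B) :
    ∃ b ∈ B, H.Adj u b ∧ H.Adj w b := by
  by_contra! hB
  refine h.not_ge ((card_le_card fun b hb => ?_).trans (card_union_le _ _))
  by_cases hub : H.Adj u b <;> simp [hb, hub, hB b hb]

theorem reachable_of_card_filter_not_adj_le {B : Finset V} {u w : V} {d : ℝ}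
    (hu : (#{x ∈ B | ¬H.Adj u x} : ℝ) ≤ d) (hw : (#{x ∈ B | ¬H.Adj w x} : ℝ) ≤ d)
    (hB : 2 * d < #B) : H.Reachable u w := by
  have hlt : #{x ∈ B | ¬H.Adj u x} + #{x ∈ B | ¬H.Adj w x} < #B := by
    rify
    linarith
  obtain ⟨_, _, hub, hwb⟩ := exists_adj_adj_of_card_filter_not_adj_add_lt hlt
  exact hub.reachable.trans hwb.reachable.symm

theorem exists_injective_adj_of_card_filter_not_adj {A B : Finset V} (hle : #A ≤ #B)
    (h : ∀ a ∈ A, ∀ b ∈ B, #{x ∈ B | ¬H.Adj a x} + #{x ∈ A | ¬H.Adj b x} ≤ #B) :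
    ∃ f : A → V, Function.Injective f ∧ ∀ a, f a ∈ B ∧ H.Adj a (f a) := by
  have hall : ∀ s : Finset A, #s ≤ #(s.biUnion fun a => {x ∈ B | H.Adj a x}) := by
    intro s
    obtain rfl | ⟨a₀, ha₀⟩ := s.eq_empty_or_nonempty
    · simp
    by_cases hcov : B ⊆ s.biUnion fun a => {x ∈ B | H.Adj a x}
    · calc #s ≤ #A := (card_le_univ s).trans_eq (Fintype.card_coe A)
        _ ≤ #B := hle
        _ ≤ _ := card_le_card hcov
    obtain ⟨b, hb, hbs⟩ := not_subset.mp hcov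
    have hs : #s ≤ #{x ∈ A | ¬H.Adj b x} := by
      rw [← card_map (Function.Embedding.subtype _)]
      refine card_le_card fun x hx => ?_
      obtain ⟨a, ha, rfl⟩ := mem_map.mp hx
      exact mem_filter.mpr ⟨a.2, fun hba =>
        hbs (mem_biUnion.mpr ⟨a, ha, mem_filter.mpr ⟨hb, hba.symm⟩⟩)⟩
    have hsplit := card_filter_add_card_filter_not (s := B) fun x => H.Adj a₀ x
    have hnbr : #{x ∈ B | H.Adj a₀ x} ≤ #(s.biUnion fun a => {x ∈ B | H.Adj a x}) :=
      card_le_card (subset_biUnion_of_mem (fun a : A => {x ∈ B | H.Adj a x}) ha₀)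
    have := h a₀ a₀.2 b hb
    omega
  obtain ⟨f, hf, hfB⟩ := (all_card_le_biUnion_card_iff_exists_injective _).mp hall
  exact ⟨f, hf, fun a => mem_filter.mp (hfB a)⟩

theorem exists_isMatching_ncard_eq_two_mul_card {A B : Finset V} {d : ℝ}
    (hAB : Disjoint A B) (hA : A.Nonempty) (hle : #A ≤ #B) (hB : 2 * d < #B)
    (hA_nonadj : ∀ a ∈ A, (#{x ∈ B | ¬H.Adj a x} : ℝ) ≤ d)
    (hB_nonadj : ∀ b ∈ B, (#{x ∈ A | ¬H.Adj b x} : ℝ) ≤ d) :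
    ∃ (K : H.ConnectedComponent) (M : H.Subgraph),
      M.IsMatching ∧ M.verts ⊆ K.supp ∧ M.verts.ncard = 2 * #A := by
  obtain ⟨f, hf, hfB⟩ := exists_injective_adj_of_card_filter_not_adj hle fun a ha b hb => by
    have := hA_nonadj a ha
    have := hB_nonadj b hb
    rify
    linarith
  have hdisj : Disjoint (A : Set V) (Set.range f) :=
    Set.disjoint_right.mpr fun _ ⟨a, hfa⟩ hA' =>
      hAB.notMem_of_mem_right_finset (hfa ▸ (hfB a).1) hA'
  obtain ⟨M, hMverts, hM⟩ := Subgraph.IsMatching.exists_of_disjoint_sets_of_equiv hdisj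
    (Equiv.ofInjective f hf) fun a => (hfB a).2
  obtain ⟨a₀, ha₀⟩ := hA
  have hA_supp : ∀ a ∈ A, a ∈ (H.connectedComponentMk a₀).supp := fun a ha =>
    ConnectedComponent.sound <| reachable_of_card_filter_not_adj_le (hA_nonadj a ha)
      (hA_nonadj a₀ ha₀) hB
  refine ⟨H.connectedComponentMk a₀, M, hM, ?_, ?_⟩
  · rw [hMverts]
    rintro v (hv | ⟨a, rfl⟩)
    · exact hA_supp v hv
    · exact (ConnectedComponent.mem_supp_congr_adj _ (hfB a).2).mp (hA_supp a a.2)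
  · rw [hMverts, Set.ncard_union_eq hdisj, Set.ncard_coe_finset, Set.ncard_range_of_injective hf,
      Nat.card_eq_fintype_card, Fintype.card_coe, two_mul]

theorem exists_isMatching_two_mul_min_card_le {A B : Finset V} {d : ℝ} (hd : 0 ≤ d)
    (hAB : Disjoint A B) (hA : 2 * d < #A) (hB : 2 * d < #B)
    (hA_nonadj : ∀ a ∈ A, (#{x ∈ B | ¬H.Adj a x} : ℝ) ≤ d)
    (hB_nonadj : ∀ b ∈ B, (#{x ∈ A | ¬H.Adj b x} : ℝ) ≤ d) :
    ∃ (K : H.ConnectedComponent) (M : H.Subgraph),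
      M.IsMatching ∧ M.verts ⊆ K.supp ∧ 2 * min #A #B ≤ M.verts.ncard := by
  wlog hle : #A ≤ #B generalizing A B
  · rw [min_comm]
    exact this hAB.symm hB hA hB_nonadj hA_nonadj (le_of_not_ge hle)
  have hA₀ : A.Nonempty := card_pos.mp (by exact_mod_cast (by linarith : (0 : ℝ) < #A))
  obtain ⟨K, M, hM, hMK, hcard⟩ :=
    exists_isMatching_ncard_eq_two_mul_card hAB hA₀ hle hB hA_nonadj hB_nonadj
  exact ⟨K, M, hM, hMK, by rw [min_eq_left hle, hcard]⟩

theorem card_filter_not_adj_le_degree_compl [Fintype V] {G : SimpleGraph V}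
    [DecidableRel G.Adj] {S : Finset V} {v : V} (hv : v ∉ S)
    (hGH : ∀ x ∈ S, G.Adj v x → H.Adj v x) :
    #{x ∈ S | ¬H.Adj v x} ≤ Gᶜ.degree v := by
  rw [← card_neighborFinset_eq_degree]
  refine card_le_card fun x hx => ?_
  obtain ⟨hxS, hx⟩ := mem_filter.mp hx
  rw [mem_neighborFinset, compl_adj]
  exact ⟨fun h => hv (h ▸ hxS), fun h => hx (hGH x hxS h)⟩

theorem degree_compl_le_of_le_ncard_neighborSet [Fintype V] {G : SimpleGraph V}
    [DecidableRel G.Adj] {δ : ℝ} {v : V} (h : δ ≤ (G.neighborSet v).ncard) :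
    (Gᶜ.degree v : ℝ) ≤ Fintype.card V - 1 - δ := by
  have hlt := G.degree_lt_card_verts v
  have hsum : (Gᶜ.degree v + G.degree v + 1 : ℝ) = Fintype.card V := by
    rw [degree_compl]
    exact_mod_cast (by omega : Fintype.card V - 1 - G.degree v + G.degree v + 1 = _)
  rw [Set.ncard_eq_toFinset_card', ← neighborFinset_def, card_neighborFinset_eq_degree] at h
  linarith

end SimpleGraph

section Colouring

variable {V : Type*} {G : SimpleGraph V} {c : Sym2 V → Fin 3} {u v : V}

theorem mem_supp_iff_of_colour {i : Fin 3} (K : (colourGraph G c i).ConnectedComponent)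
    (huv : G.Adj u v) (hc : c s(u, v) = i) : u ∈ K.supp ↔ v ∈ K.supp :=
  K.mem_supp_congr_adj ⟨huv, hc⟩

theorem colourGraph_two_adj_of_separates (K₁ : (colourGraph G c 0).ConnectedComponent)
    (K₂ : (colourGraph G c 1).ConnectedComponent) (huv : G.Adj u v)
    (h₁ : ¬(u ∈ K₁.supp ↔ v ∈ K₁.supp)) (h₂ : ¬(u ∈ K₂.supp ↔ v ∈ K₂.supp)) :
    (colourGraph G c 2).Adj u v := by
  refine ⟨huv, ?_⟩
  match h : c s(u, v) with
  | 0 => exact absurd (mem_supp_iff_of_colour K₁ huv h) h₁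
  | 1 => exact absurd (mem_supp_iff_of_colour K₂ huv h) h₂
  | 2 => rfl

variable [Fintype V] [DecidableEq V] [DecidableRel G.Adj] {d : ℝ}
  (K₁ : (colourGraph G c 0).ConnectedComponent) (K₂ : (colourGraph G c 1).ConnectedComponent)

theorem card_filter_not_colourGraph_two_adj_le [DecidableRel (colourGraph G c 2).Adj]
    (hd : ∀ v, (Gᶜ.degree v : ℝ) ≤ d) {S : Finset V}
    (hsep : ∀ x ∈ S, ¬(v ∈ K₁.supp ↔ x ∈ K₁.supp) ∧ ¬(v ∈ K₂.supp ↔ x ∈ K₂.supp)) :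
    (#{x ∈ S | ¬(colourGraph G c 2).Adj v x} : ℝ) ≤ d := by
  refine (Nat.cast_le.mpr (card_filter_not_adj_le_degree_compl (fun hv => ?_)
    fun x hx hvx => ?_)).trans (hd v)
  · exact (hsep v hv).1 Iff.rfl
  · exact colourGraph_two_adj_of_separates K₁ K₂ hvx (hsep x hx).1 (hsep x hx).2

theorem exists_isMatching_of_two_mul_lt_ncard_sdiff (hd : ∀ v, (Gᶜ.degree v : ℝ) ≤ d)
    (h₁ : 2 * d < (K₁.supp \ K₂.supp).ncard) (h₂ : 2 * d < (K₂.supp \ K₁.supp).ncard) :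
    ∃ (K : (colourGraph G c 2).ConnectedComponent) (M : (colourGraph G c 2).Subgraph),
      M.IsMatching ∧ M.verts ⊆ K.supp ∧
        2 * min (K₁.supp \ K₂.supp).ncard (K₂.supp \ K₁.supp).ncard ≤ M.verts.ncard := by
  classical
  have hd₀ : 0 ≤ d := (Nat.cast_nonneg _).trans (hd K₁.exists_rep.choose)
  have hdisj : Disjoint (K₁.supp \ K₂.supp) (K₂.supp \ K₁.supp) :=
    Set.disjoint_sdiff_left.mono_right Set.sdiff_subset
  simp only [Set.ncard_eq_toFinset_card'] at h₁ h₂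
  rw [Set.ncard_eq_toFinset_card' (K₁.supp \ K₂.supp),
    Set.ncard_eq_toFinset_card' (K₂.supp \ K₁.supp)]
  refine exists_isMatching_two_mul_min_card_le hd₀ (Set.disjoint_toFinset.mpr hdisj) h₁ h₂
    (fun x hx => card_filter_not_colourGraph_two_adj_le K₁ K₂ hd fun y hy => ?_)
    (fun x hx => card_filter_not_colourGraph_two_adj_le K₁ K₂ hd fun y hy => ?_)
  all_goals
    simp only [Set.mem_toFinset, Set.mem_sdiff] at hx hy
    tauto

theorem exists_supp_union_eq_univ_of_two_mul_lt_ncard_inter (hd : ∀ v, (Gᶜ.degree v : ℝ) ≤ d)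
    (h : 2 * d < (K₁.supp ∩ K₂.supp).ncard) :
    ∃ K₃ : (colourGraph G c 2).ConnectedComponent, K₁.supp ∪ K₂.supp ∪ K₃.supp = Set.univ := by
  classical
  by_cases hcov : K₁.supp ∪ K₂.supp = Set.univ
  · exact ⟨(colourGraph G c 2).connectedComponentMk K₁.exists_rep.choose, by
      rw [hcov, Set.univ_union]⟩
  obtain ⟨w, hw⟩ := (Set.ne_univ_iff_exists_notMem _).mp hcov
  have hnonadj : ∀ v ∉ K₁.supp ∪ K₂.supp,
      (#{x ∈ (K₁.supp ∩ K₂.supp).toFinset | ¬(colourGraph G c 2).Adj v x} : ℝ) ≤ d :=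
    fun v hv => card_filter_not_colourGraph_two_adj_le K₁ K₂ hd fun x hx => by
      simp only [Set.mem_toFinset, Set.mem_inter_iff, Set.mem_union] at hx hv
      tauto
  refine ⟨(colourGraph G c 2).connectedComponentMk w, Set.eq_univ_of_forall fun v => ?_⟩
  by_cases hv : v ∈ K₁.supp ∪ K₂.supp
  · exact Or.inl hv
  rw [Set.ncard_eq_toFinset_card'] at h
  exact Or.inr <| ConnectedComponent.sound <|
    reachable_of_card_filter_not_adj_le (hnonadj v hv) (hnonadj w hw) h

end Colouring

theorem stmt15_general (N : ℕ) (G : SimpleGraph (Fin N))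
    (hdeg : ∀ v, (N : ℝ) - (N : ℝ) / 8 ≤ (G.neighborSet v).ncard)
    (c : Sym2 (Fin N) → Fin 3)
    (hno : ¬ ∃ (i : Fin 3) (M : (colourGraph G c i).Subgraph)
        (K : (colourGraph G c i).ConnectedComponent),
        M.IsMatching ∧ M.verts ⊆ K.supp ∧ (N : ℝ) / 2 ≤ M.verts.ncard)
    (K₁ : (colourGraph G c 0).ConnectedComponent)
    (K₂ : (colourGraph G c 1).ConnectedComponent)
    (h₁ : (N : ℝ) / 2 ≤ K₁.supp.ncard) (h₂ : (N : ℝ) / 2 ≤ K₂.supp.ncard) :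
    ∃ K₃ : (colourGraph G c 2).ConnectedComponent,
      K₁.supp ∪ K₂.supp ∪ K₃.supp = Set.univ := by
  classical
  have hd : ∀ v, (Gᶜ.degree v : ℝ) ≤ N / 8 - 1 := fun v => by
    have := degree_compl_le_of_le_ncard_neighborSet (hdeg v)
    rw [Fintype.card_fin] at this
    linarith
  by_cases hI : 2 * (N / 8 - 1 : ℝ) < (K₁.supp ∩ K₂.supp).ncard
  · exact exists_supp_union_eq_univ_of_two_mul_lt_ncard_inter K₁ K₂ hd hI
  have hsplit₁ := Set.ncard_inter_add_ncard_sdiff_eq_ncard K₁.supp K₂.supp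
  have hsplit₂ := Set.ncard_inter_add_ncard_sdiff_eq_ncard K₂.supp K₁.supp
  rw [Set.inter_comm] at hsplit₂
  rify at hsplit₁ hsplit₂
  obtain ⟨K, M, hM, hMK, hcard⟩ :=
    exists_isMatching_of_two_mul_lt_ncard_sdiff K₁ K₂ hd (by linarith) (by linarith)
  refine (hno ⟨2, M, K, hM, hMK, ?_⟩).elim
  rify at hcard
  have hmin : (N / 4 : ℝ) ≤ min ((K₁.supp \ K₂.supp).ncard : ℝ) (K₂.supp \ K₁.supp).ncard :=
    le_min (by linarith) (by linarith)
  linarith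

/-- Let G be a graph on N vertices with minimum degree at least N − N/8, 3-edge-coloured,
with no monochromatic component having a matching saturating at least N/2 vertices and all
monochromatic components on fewer than 3N/4 vertices. Then for each pair of monochromatic
components K₁ of the first colour and K₂ of the second colour with at least N/2 vertices
each, there is a monochromatic component K₃ of the third colour such that the supports of
K₁, K₂, K₃ cover the whole vertex set. -/
theorem stmt15 (N : ℕ) (G : SimpleGraph (Fin N))
    (hdeg : ∀ v, (N : ℝ) - (N : ℝ) / 8 ≤ (G.neighborSet v).ncard)
    (c : Sym2 (Fin N) → Fin 3)
    (hno : ¬ ∃ (i : Fin 3) (M : (colourGraph G c i).Subgraph)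
        (K : (colourGraph G c i).ConnectedComponent),
        M.IsMatching ∧ M.verts ⊆ K.supp ∧ (N : ℝ) / 2 ≤ M.verts.ncard)
    (hsmall : ∀ (i : Fin 3) (K : (colourGraph G c i).ConnectedComponent),
      (K.supp.ncard : ℝ) < 3 * (N : ℝ) / 4)
    (K₁ : (colourGraph G c 0).ConnectedComponent)
    (K₂ : (colourGraph G c 1).ConnectedComponent)
    (h₁ : (N : ℝ) / 2 ≤ K₁.supp.ncard) (h₂ : (N : ℝ) / 2 ≤ K₂.supp.ncard) :
    ∃ K₃ : (colourGraph G c 2).ConnectedComponent,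
      K₁.supp ∪ K₂.supp ∪ K₃.supp = Set.univ :=
  stmt15_general N G hdeg c hno K₁ K₂ h₁ h₂
end

section
/- For every integer ℓ ≥ 2 there exists a graph Ĝ on 8ℓ vertices with minimum degree 7ℓ − 2 together with a colouring of the edges of Ĝ with three colours that contains no monochromatic cycle of length 4ℓ. -/
/-!
Split the `8ℓ` vertices into eight classes indexed by the cube `{0,1}³`, with sizes `ℓ - 2` at the
two constant vectors and at most `ℓ + 1` elsewhere, and join two vertices unless their classes are
antipodal; every vertex then misses at most `ℓ + 1` others. Two non-antipodal cube vertices `a, b`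
agree in some coordinate `i`, and the edge `ab` can be given colour `i` so that it meets one of the
two classes `{x | x i = x (i + 1) = a i}`. Hence a cycle of colour `i` stays in one half-cube
`{x | x i = β}`, and all its edges meet the two classes `{x | x i = x (i + 1) = β}`, one of which
is the class of a constant vector, so together they hold at most `(ℓ - 2) + (ℓ + 1) = 2ℓ - 1` vertices,
whereas every vertex cover of a cycle of length `4ℓ` has at least `2ℓ` vertices.
-/

open SimpleGraph

open Finset

namespace SimpleGraph.Walk

variable {V : Type*} {G : SimpleGraph V}

lemma apply_getVert_eq {β : Type*} {f : V → β} (hf : ∀ x y, G.Adj x y → f x = f y)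
    {u v : V} (w : G.Walk u v) (k : ℕ) : f (w.getVert k) = f u := by
  induction w generalizing k with
  | nil => simp
  | cons h p ih =>
    cases k with
    | zero => simp
    | succ k => rw [getVert_cons_succ, ih, hf _ _ h]

lemma IsCycle.length_div_two_le_card_of_cover {u : V} {w : G.Walk u u} (hw : w.IsCycle)
    (S : Finset V) (hS : ∀ k < w.length, w.getVert k ∈ S ∨ w.getVert (k + 1) ∈ S) :
    w.length / 2 ≤ #S := by
  classical
  -- the `j`-th of the disjoint edges `{2j, 2j + 1}` picks an endpoint `idx j` in `S`
  let idx (j : ℕ) : ℕ := if w.getVert (2 * j) ∈ S then 2 * j else 2 * j + 1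
  have hidx (j : Fin (w.length / 2)) :
      idx j / 2 = j ∧ idx j ≤ w.length - 1 ∧ w.getVert (idx j) ∈ S := by
    have := hS (2 * j) (by omega)
    by_cases h : w.getVert (2 * j) ∈ S <;> simp_all [idx] <;> omega
  simpa using card_le_card_of_injOn (s := univ) (fun j : Fin (w.length / 2) => w.getVert (idx j))
    (fun j _ => (hidx j).2.2) fun j _ j' _ h => Fin.ext <| by
      rw [← (hidx j).1, ← (hidx j').1, hw.getVert_injOn' (hidx j).2.1 (hidx j').2.1 h]

end SimpleGraph.Walk

lemma exists_fin_card_fiber_eq {α : Type*} [Fintype α] [DecidableEq α] (n : α → ℕ) {N : ℕ}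
    (hN : ∑ a, n a = N) : ∃ t : Fin N → α, ∀ a, #{x | t x = a} = n a := by
  let e : (Σ a, Fin (n a)) ≃ Fin N := Fintype.equivFinOfCardEq (by simp [hN])
  refine ⟨fun x => (e.symm x).1, fun a => ?_⟩
  rw [← Fintype.card_subtype, ← Fintype.card_fin (n a)]
  exact Fintype.card_congr (e.symm.subtypeEquivOfSubtype.trans (Equiv.sigmaSubtype a))

abbrev Cube := Fin 3 → Bool

namespace Cube

def antipode (a : Cube) : Cube := fun j => !a j

lemma ne_antipode_comm {a b : Cube} : a ≠ antipode b ↔ b ≠ antipode a := by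
  constructor <;> rintro h rfl <;> exact h (funext fun j => by simp [antipode])

lemma antipode_ne_self (a : Cube) : antipode a ≠ a := fun h => by
  simpa [antipode] using congrFun h 0

def AllowsColour (i : Fin 3) (a b : Cube) : Prop :=
  a i = b i ∧ (a i = a (i + 1) ∨ b i = b (i + 1))

instance (i : Fin 3) (a b : Cube) : Decidable (AllowsColour i a b) := by
  unfold AllowsColour; infer_instance

def edgeColour (a b : Cube) : Fin 3 :=
  if AllowsColour 0 a b then 0 else if AllowsColour 1 a b then 1 else 2

lemma edgeColour_comm : ∀ a b : Cube, edgeColour a b = edgeColour b a := by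
  decide

lemma allowsColour_edgeColour :
    ∀ a b : Cube, a ≠ antipode b → AllowsColour (edgeColour a b) a b := by
  decide

def excess (a : Cube) : ℕ :=
  if a 0 = a 1 ∧ a 1 = a 2 then 0 else if a = ![false, false, true] then 1 else 3

lemma sum_excess : ∑ a, excess a = 16 := by decide

lemma excess_le (a : Cube) : excess a ≤ 3 := by
  unfold excess; split_ifs <;> omega

lemma card_pair : ∀ (i : Fin 3) (β : Bool), #{a : Cube | a i = β ∧ a (i + 1) = β} = 2 := by
  decide

lemma sum_excess_pair_le :
    ∀ (i : Fin 3) (β : Bool), ∑ a with a i = β ∧ a (i + 1) = β, excess a ≤ 3 := by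
  decide

def classSize (ℓ : ℕ) (a : Cube) : ℕ := ℓ - 2 + excess a

variable {ℓ : ℕ}

lemma sum_classSize (hℓ : 2 ≤ ℓ) : ∑ a, classSize ℓ a = 8 * ℓ := by
  have hcard : Fintype.card Cube = 8 := rfl
  simp only [classSize, sum_add_distrib, sum_const, card_univ, hcard, sum_excess, smul_eq_mul]
  omega

lemma classSize_le (hℓ : 2 ≤ ℓ) (a : Cube) : classSize ℓ a ≤ ℓ + 1 := by
  have := excess_le a
  unfold classSize; omega

lemma sum_classSize_pair_le (hℓ : 2 ≤ ℓ) (i : Fin 3) (β : Bool) :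
    ∑ a with a i = β ∧ a (i + 1) = β, classSize ℓ a ≤ 2 * ℓ - 1 := by
  have := sum_excess_pair_le i β
  simp only [classSize, sum_add_distrib, sum_const, smul_eq_mul, card_pair]
  omega

end Cube

open Cube

section Blowup

variable {V : Type*} (t : V → Cube)

def cubeBlowup : SimpleGraph V where
  Adj u v := u ≠ v ∧ t u ≠ antipode (t v)
  symm := ⟨fun _ _ h => ⟨h.1.symm, ne_antipode_comm.1 h.2⟩⟩
  loopless := ⟨fun _ h => h.1 rfl⟩

def cubeBlowupColouring : Sym2 V → Fin 3 :=
  Sym2.lift ⟨fun u v => edgeColour (t u) (t v), fun _ _ => edgeColour_comm _ _⟩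

variable {t}

lemma allowsColour_of_adj_colourGraph {i : Fin 3} {u v : V}
    (h : (colourGraph (cubeBlowup t) (cubeBlowupColouring t) i).Adj u v) :
    AllowsColour i (t u) (t v) :=
  h.2 ▸ allowsColour_edgeColour _ _ h.1.2

lemma ncard_neighborSet_cubeBlowup [Fintype V] [DecidableEq V] (v : V) :
    ((cubeBlowup t).neighborSet v).ncard =
      Fintype.card V - #{u | t u = antipode (t v)} - 1 := by
  have : (cubeBlowup t).neighborSet v = ↑(({u | t u = antipode (t v)} : Finset V)ᶜ.erase v) := by
    ext u
    simp [cubeBlowup, ne_comm, ne_antipode_comm, and_comm]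
  rw [this, Set.ncard_coe_finset, card_erase_of_mem (by simpa using (antipode_ne_self _).symm),
    card_compl]

lemma SimpleGraph.Walk.IsCycle.length_div_two_le_card_cubeBlowup [Fintype V] {i : Fin 3} {v : V}
    {w : (colourGraph (cubeBlowup t) (cubeBlowupColouring t) i).Walk v v} (hw : w.IsCycle) :
    w.length / 2 ≤ #{x | t x i = t v i ∧ t x (i + 1) = t v i} := by
  classical
  refine hw.length_div_two_le_card_of_cover _ fun k hk => ?_
  have hhalf : t (w.getVert k) i = t v i :=
    w.apply_getVert_eq (f := fun x => t x i) (fun _ _ h => (allowsColour_of_adj_colourGraph h).1) k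
  obtain ⟨hsame, hcover⟩ := allowsColour_of_adj_colourGraph (w.adj_getVert_succ hk)
  simp only [mem_filter, mem_univ, true_and]
  grind

end Blowup

/-- For every ℓ ≥ 2 there exists a graph Ĝ on 8ℓ vertices with minimum degree 7ℓ − 2
together with a 3-colouring of its edges containing no monochromatic cycle of length 4ℓ. -/
theorem stmt17 (ℓ : ℕ) (hℓ : 2 ≤ ℓ) :
    ∃ (G : SimpleGraph (Fin (8 * ℓ))) (c : Sym2 (Fin (8 * ℓ)) → Fin 3),
      (∀ v, 7 * ℓ - 2 ≤ (G.neighborSet v).ncard) ∧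
      (∃ v, (G.neighborSet v).ncard = 7 * ℓ - 2) ∧
      ¬ ∃ (i : Fin 3) (v : Fin (8 * ℓ)) (w : (colourGraph G c i).Walk v v),
          w.IsCycle ∧ w.length = 4 * ℓ := by
  obtain ⟨t, ht⟩ := exists_fin_card_fiber_eq (classSize ℓ) (sum_classSize hℓ)
  have hdeg (v : Fin (8 * ℓ)) : ((cubeBlowup t).neighborSet v).ncard =
      8 * ℓ - classSize ℓ (antipode (t v)) - 1 := by
    simp [ncard_neighborSet_cubeBlowup, ht]
  refine ⟨cubeBlowup t, cubeBlowupColouring t, fun v => ?_, ?_, ?_⟩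
  · have := classSize_le hℓ (antipode (t v))
    rw [hdeg]; omega
  · obtain ⟨v, hv⟩ : ∃ v, t v = ![false, true, false] := by
      by_contra! h
      simpa [h, classSize, excess] using ht ![false, true, false]
    have : excess (antipode ![false, true, false]) = 3 := by decide
    exact ⟨v, by rw [hdeg, hv, classSize, this]; omega⟩
  · rintro ⟨i, v, w, hw, hlen⟩
    have hcycle := hw.length_div_two_le_card_cubeBlowup
    have hclass : #{x | t x i = t v i ∧ t x (i + 1) = t v i} =
        ∑ a with a i = t v i ∧ a (i + 1) = t v i, classSize ℓ a := by
      simp_rw [← ht]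
      rw [sum_card_fiberwise_eq_card_filter]
      simp
    have := sum_classSize_pair_le hℓ i (t v i)
    omega
end
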